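/- arXiv:2508.17167 — 4 statements merged into one kernel-verified Lean document; each statement's English description precedes it below -/
import Mathlib

section
/- Let q ∈ [0,∞), c ∈ ℝ, a < b, and let 𝔸: ℝ → ℝ satisfy |𝔸(x)| ≤ c(1+|x|^q) for all x ∈ ℝ. For a feedforward neural network with activation 𝔸, layer dimensions ℓ = (ℓ₀,…,ℓ_L), and parameter vector θ, the output of each neuron at layer k ∈ {1,…,L} is bounded on [a,b]^{ℓ₀} by [max{1,|a|,|b|}]^{max{1,q^{k-1}}} · [max{1, max_j |θ_j| over the first d_k parameters}]^{k·max{1,q^{k-1}}} · [1 + 2·max{c,1}·max{ℓ₀,…,ℓ_{k-1}}]^{k·max{1,q^{k-1}}}, where d_k = Σ_{h=1}^{k} ℓ_h(ℓ_{h-1}+1). -/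
open MeasureTheory Finset

/-- Number of parameters used by the first `k` affine layers:
`dk l k = ∑_{h=1}^{k} l_h (l_{h-1} + 1)`. -/
noncomputable def dk (l : ℕ → ℕ) (k : ℕ) : ℕ :=
  ∑ h ∈ Finset.range k, l (h + 1) * (l h + 1)

/-- Feedforward neural network with activation `A`, architecture `l`, parameters `θ`
(1-based indexing), input `x` (1-based indexing): `net A l θ x v i` is the output of
neuron `i` at layer `v`. -/
noncomputable def net (A : ℝ → ℝ) (l : ℕ → ℕ) (θ : ℕ → ℝ) (x : ℕ → ℝ) : ℕ → ℕ → ℝ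
  | 0, i => x i
  | (v + 1), i =>
      θ (l (v + 1) * l v + i + dk l v) +
      ∑ j ∈ Finset.Icc 1 (l v),
        θ ((i - 1) * l v + j + dk l v) *
          (if v = 0 then x j else A (net A l θ x v j))

/-- The ReLU activation function. -/
noncomputable def relu : ℝ → ℝ := fun x => max x 0

/-- Reinterpret a Euclidean vector as a 1-based-indexed input to a network. -/
noncomputable def toInput (d : ℕ) (x : EuclideanSpace ℝ (Fin d)) : ℕ → ℝ :=
  fun j => if h : 0 < j ∧ j ≤ d then x ⟨j - 1, by omega⟩ else 0

section NeuronAux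

open Finset

private noncomputable def Mb (a b : ℝ) : ℝ := max 1 (max |a| |b|)

private noncomputable def Tt (l : ℕ → ℕ) (θ : ℕ → ℝ) (k : ℕ) : ℝ :=
  max 1 (Finset.fold max 0 (fun j => |θ j|) (Finset.Icc 1 (dk l k)))

private noncomputable def Ff (l : ℕ → ℕ) (k : ℕ) : ℝ :=
  Finset.fold max 0 (fun h => (l h : ℝ)) (Finset.range k)

private noncomputable def Nn (c : ℝ) (l : ℕ → ℕ) (k : ℕ) : ℝ :=
  1 + 2 * max c 1 * Ff l k

private noncomputable def Ee (q : ℝ) (k : ℕ) : ℝ := max 1 (q ^ (k - 1))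

private noncomputable def Bb (q c a b : ℝ) (l : ℕ → ℕ) (θ : ℕ → ℝ) (k : ℕ) : ℝ :=
  Mb a b ^ Ee q k * Tt l θ k ^ ((k : ℝ) * Ee q k) * Nn c l k ^ ((k : ℝ) * Ee q k)

private lemma one_le_Mb (a b : ℝ) : 1 ≤ Mb a b := le_max_left _ _
private lemma one_le_Tt (l : ℕ → ℕ) (θ : ℕ → ℝ) (k : ℕ) : 1 ≤ Tt l θ k := le_max_left _ _
private lemma one_le_Ee (q : ℝ) (k : ℕ) : 1 ≤ Ee q k := le_max_left _ _
private lemma one_le_mc (c : ℝ) : 1 ≤ max c 1 := le_max_right _ _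

private lemma Ff_nonneg (l : ℕ → ℕ) (k : ℕ) : 0 ≤ Ff l k :=
  (Finset.le_fold_max _).2 (Or.inl le_rfl)

private lemma one_le_Nn (c : ℝ) (l : ℕ → ℕ) (k : ℕ) : 1 ≤ Nn c l k := by
  have h1 := Ff_nonneg l k
  have h2 := one_le_mc c
  have : 0 ≤ 2 * max c 1 * Ff l k := by nlinarith
  simp only [Nn]; linarith

private lemma Ee_nonneg (q : ℝ) (k : ℕ) : 0 ≤ Ee q k := le_trans zero_le_one (one_le_Ee q k)

private lemma one_le_Bb (q c a b : ℝ) (l : ℕ → ℕ) (θ : ℕ → ℝ) (k : ℕ) :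
    1 ≤ Bb q c a b l θ k := by
  have h1 : (1:ℝ) ≤ Mb a b ^ Ee q k := Real.one_le_rpow (one_le_Mb a b) (Ee_nonneg q k)
  have hke : 0 ≤ (k : ℝ) * Ee q k := mul_nonneg (Nat.cast_nonneg k) (Ee_nonneg q k)
  have h2 : (1:ℝ) ≤ Tt l θ k ^ ((k : ℝ) * Ee q k) := Real.one_le_rpow (one_le_Tt l θ k) hke
  have h3 : (1:ℝ) ≤ Nn c l k ^ ((k : ℝ) * Ee q k) := Real.one_le_rpow (one_le_Nn c l k) hke
  calc (1:ℝ) = 1 * 1 * 1 := by ring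
    _ ≤ _ := by
        apply mul_le_mul (mul_le_mul h1 h2 zero_le_one (by linarith)) h3 zero_le_one
        nlinarith

private lemma theta_le (l : ℕ → ℕ) (θ : ℕ → ℝ) (k j : ℕ) (hj : j ∈ Finset.Icc 1 (dk l k)) :
    |θ j| ≤ Tt l θ k :=
  le_max_of_le_right ((Finset.le_fold_max _).2 (Or.inr ⟨j, hj, le_rfl⟩))

private lemma Tt_mono (l : ℕ → ℕ) (θ : ℕ → ℝ) (k : ℕ) : Tt l θ k ≤ Tt l θ (k + 1) := by
  have hdk : dk l k ≤ dk l (k + 1) := by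
    simp only [dk, Finset.sum_range_succ]; omega
  apply max_le (le_max_left _ _)
  apply le_max_of_le_right
  rw [Finset.fold_max_le]
  refine ⟨(Finset.le_fold_max _).2 (Or.inl le_rfl), fun j hj => ?_⟩
  exact (Finset.le_fold_max _).2 (Or.inr ⟨j, Finset.Icc_subset_Icc_right hdk hj, le_rfl⟩)

private lemma Ff_mono (l : ℕ → ℕ) (k : ℕ) : Ff l k ≤ Ff l (k + 1) := by
  rw [Ff, Finset.fold_max_le]
  refine ⟨Ff_nonneg l (k+1), fun j hj => ?_⟩
  exact (Finset.le_fold_max _).2 (Or.inr ⟨j, Finset.range_subset_range.2 (by omega) hj, le_rfl⟩)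

private lemma Nn_mono (c : ℝ) (l : ℕ → ℕ) (k : ℕ) : Nn c l k ≤ Nn c l (k + 1) := by
  have h1 := Ff_mono l k
  have h2 : (0:ℝ) ≤ 2 * max c 1 := by have := one_le_mc c; linarith
  simp only [Nn]; nlinarith

private lemma l_le_Ff (l : ℕ → ℕ) (k : ℕ) : (l k : ℝ) ≤ Ff l (k + 1) :=
  (Finset.le_fold_max _).2 (Or.inr ⟨k, Finset.self_mem_range_succ k, le_rfl⟩)

private lemma qE_le (q : ℝ) (hq : 0 ≤ q) (k : ℕ) (hk : 1 ≤ k) :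
    q * Ee q k ≤ Ee q (k + 1) := by
  have hE1 : Ee q (k + 1) = max 1 (q ^ k) := by simp [Ee]
  have h2 : q * Ee q k = max q (q ^ k) := by
    rw [Ee, mul_max_of_nonneg _ _ hq, mul_one]
    congr 1
    rw [← pow_succ']
    congr 1
    omega
  rw [hE1, h2]
  apply max_le _ (le_max_right _ _)
  rcases le_total q 1 with h | h
  · exact le_max_of_le_left h
  · exact le_max_of_le_right (le_self_pow₀ h (by omega))

private lemma main_bound (q c a b : ℝ) (hq : 0 ≤ q)
    (A : ℝ → ℝ) (hA : ∀ t : ℝ, |A t| ≤ c * (1 + |t| ^ q))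
    (l : ℕ → ℕ) (hl : ∀ i, 1 ≤ l i) (θ : ℕ → ℝ) (x : ℕ → ℝ)
    (hx : ∀ j ∈ Finset.Icc 1 (l 0), |x j| ≤ Mb a b) :
    ∀ k, 1 ≤ k → ∀ i ∈ Finset.Icc 1 (l k), |net A l θ x k i| ≤ Bb q c a b l θ k := by
  intro k hk
  induction k, hk using Nat.le_induction with
  | base =>
    intro i hi
    rw [Finset.mem_Icc] at hi
    have hdk0 : dk l 0 = 0 := by simp [dk]
    have hdk1 : dk l 1 = l 1 * l 0 + l 1 := by simp [dk]; ring
    have hM := one_le_Mb a b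
    have hT := one_le_Tt l θ 1
    have hmc := one_le_mc c
    have hbmem : l 1 * l 0 + i + dk l 0 ∈ Finset.Icc 1 (dk l 1) := by
      rw [Finset.mem_Icc]; omega
    have hwmem : ∀ j ∈ Finset.Icc 1 (l 0),
        (i - 1) * l 0 + j + dk l 0 ∈ Finset.Icc 1 (dk l 1) := by
      intro j hj
      rw [Finset.mem_Icc] at hj ⊢
      have h1 : (i - 1) * l 0 + l 0 ≤ l 1 * l 0 := by
        calc (i - 1) * l 0 + l 0 = ((i - 1) + 1) * l 0 := by ring
          _ ≤ l 1 * l 0 := Nat.mul_le_mul_right _ (by omega)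
      omega
    have hterm : ∀ j ∈ Finset.Icc 1 (l 0),
        |θ ((i - 1) * l 0 + j + dk l 0) * x j| ≤ Tt l θ 1 * Mb a b := by
      intro j hj
      rw [abs_mul]
      exact mul_le_mul (theta_le l θ 1 _ (hwmem j hj)) (hx j hj) (abs_nonneg _)
        (by linarith)
    have hsum : |∑ j ∈ Finset.Icc 1 (l 0), θ ((i - 1) * l 0 + j + dk l 0) * x j|
        ≤ (l 0 : ℝ) * (Tt l θ 1 * Mb a b) := by
      calc |∑ j ∈ Finset.Icc 1 (l 0), θ ((i - 1) * l 0 + j + dk l 0) * x j|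
          ≤ ∑ j ∈ Finset.Icc 1 (l 0), |θ ((i - 1) * l 0 + j + dk l 0) * x j| :=
            Finset.abs_sum_le_sum_abs _ _
        _ ≤ ∑ _j ∈ Finset.Icc 1 (l 0), Tt l θ 1 * Mb a b := Finset.sum_le_sum hterm
        _ = (l 0 : ℝ) * (Tt l θ 1 * Mb a b) := by
            rw [Finset.sum_const, Nat.card_Icc]; simp [nsmul_eq_mul]
    have hnet : |net A l θ x 1 i| ≤ Tt l θ 1 + (l 0 : ℝ) * (Tt l θ 1 * Mb a b) := by
      have : net A l θ x 1 i = θ (l 1 * l 0 + i + dk l 0) +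
          ∑ j ∈ Finset.Icc 1 (l 0), θ ((i - 1) * l 0 + j + dk l 0) * x j := by
        show net A l θ x (0 + 1) i = _
        simp [net]
      rw [this]
      calc |θ (l 1 * l 0 + i + dk l 0) + ∑ j ∈ Finset.Icc 1 (l 0),
              θ ((i - 1) * l 0 + j + dk l 0) * x j|
          ≤ |θ (l 1 * l 0 + i + dk l 0)| + |∑ j ∈ Finset.Icc 1 (l 0),
              θ ((i - 1) * l 0 + j + dk l 0) * x j| := abs_add_le _ _
        _ ≤ _ := add_le_add (theta_le l θ 1 _ hbmem) hsum
    have hBb1 : Bb q c a b l θ 1 = Mb a b * (Tt l θ 1 * (1 + 2 * max c 1 * (l 0 : ℝ))) := by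
      have hE : Ee q 1 = 1 := by simp [Ee]
      have hF : Ff l 1 = (l 0 : ℝ) := by
        simp [Ff, Finset.range_one]
      rw [Bb, Nn, hE, hF]
      push_cast
      rw [one_mul, Real.rpow_one, Real.rpow_one, Real.rpow_one]
      ring
    rw [hBb1]
    have hl0 : (0:ℝ) ≤ (l 0 : ℝ) := Nat.cast_nonneg _
    nlinarith [mul_nonneg (mul_nonneg hl0 (by linarith : (0:ℝ) ≤ Tt l θ 1))
        (by linarith : (0:ℝ) ≤ Mb a b),
      mul_le_mul_of_nonneg_left hM (by linarith : (0:ℝ) ≤ Tt l θ 1),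
      mul_nonneg hl0 (by linarith : (0:ℝ) ≤ max c 1 - 1)]
  | succ k hk ih =>
    intro i hi
    rw [Finset.mem_Icc] at hi
    have hM := one_le_Mb a b
    have hT' := one_le_Tt l θ (k + 1)
    have hTk := one_le_Tt l θ k
    have hN' := one_le_Nn c l (k + 1)
    have hNk := one_le_Nn c l k
    have hmc := one_le_mc c
    have hE' := one_le_Ee q (k + 1)
    have hEk := one_le_Ee q k
    have hP := one_le_Bb q c a b l θ k
    have hPq : (1:ℝ) ≤ Bb q c a b l θ k ^ q := Real.one_le_rpow hP hq
    set P := Bb q c a b l θ k with hPdef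
    -- index membership
    have hdks : dk l (k + 1) = dk l k + l (k + 1) * l k + l (k + 1) := by
      simp only [dk, Finset.sum_range_succ]; ring
    have hbmem : l (k + 1) * l k + i + dk l k ∈ Finset.Icc 1 (dk l (k + 1)) := by
      rw [Finset.mem_Icc]; omega
    have hwmem : ∀ j ∈ Finset.Icc 1 (l k),
        (i - 1) * l k + j + dk l k ∈ Finset.Icc 1 (dk l (k + 1)) := by
      intro j hj
      rw [Finset.mem_Icc] at hj ⊢
      have h1 : (i - 1) * l k + l k ≤ l (k + 1) * l k := by
        calc (i - 1) * l k + l k = ((i - 1) + 1) * l k := by ring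
          _ ≤ l (k + 1) * l k := Nat.mul_le_mul_right _ (by omega)
      omega
    -- bound on activation values
    have hAct : ∀ j ∈ Finset.Icc 1 (l k),
        |A (net A l θ x k j)| ≤ max c 1 * (1 + P ^ q) := by
      intro j hj
      have h1 : |net A l θ x k j| ^ q ≤ P ^ q :=
        Real.rpow_le_rpow (abs_nonneg _) (ih j hj) hq
      have h2 : (0:ℝ) ≤ 1 + |net A l θ x k j| ^ q := by
        have := Real.rpow_nonneg (abs_nonneg (net A l θ x k j)) q; linarith
      calc |A (net A l θ x k j)| ≤ c * (1 + |net A l θ x k j| ^ q) := hA _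
        _ ≤ max c 1 * (1 + P ^ q) :=
            mul_le_mul (le_max_left _ _) (by linarith) h2 (by linarith)
    have hterm : ∀ j ∈ Finset.Icc 1 (l k),
        |θ ((i - 1) * l k + j + dk l k) * A (net A l θ x k j)|
          ≤ Tt l θ (k + 1) * (max c 1 * (1 + P ^ q)) := by
      intro j hj
      rw [abs_mul]
      refine mul_le_mul (theta_le l θ (k + 1) _ (hwmem j hj)) (hAct j hj) (abs_nonneg _) ?_
      linarith
    have hnet : |net A l θ x (k + 1) i| ≤
        Tt l θ (k + 1) + (l k : ℝ) * (Tt l θ (k + 1) * (max c 1 * (1 + P ^ q))) := by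
      have hk0 : k ≠ 0 := by omega
      have heq : net A l θ x (k + 1) i = θ (l (k + 1) * l k + i + dk l k) +
          ∑ j ∈ Finset.Icc 1 (l k), θ ((i - 1) * l k + j + dk l k) * A (net A l θ x k j) := by
        simp [net, hk0]
      rw [heq]
      calc |θ (l (k + 1) * l k + i + dk l k) + ∑ j ∈ Finset.Icc 1 (l k),
              θ ((i - 1) * l k + j + dk l k) * A (net A l θ x k j)|
          ≤ |θ (l (k + 1) * l k + i + dk l k)| + |∑ j ∈ Finset.Icc 1 (l k),
              θ ((i - 1) * l k + j + dk l k) * A (net A l θ x k j)| := abs_add_le _ _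
        _ ≤ Tt l θ (k + 1) + (l k : ℝ) * (Tt l θ (k + 1) * (max c 1 * (1 + P ^ q))) := by
            refine add_le_add (theta_le l θ (k + 1) _ hbmem) ?_
            calc |∑ j ∈ Finset.Icc 1 (l k),
                    θ ((i - 1) * l k + j + dk l k) * A (net A l θ x k j)|
                ≤ ∑ j ∈ Finset.Icc 1 (l k),
                    |θ ((i - 1) * l k + j + dk l k) * A (net A l θ x k j)| :=
                  Finset.abs_sum_le_sum_abs _ _
              _ ≤ ∑ _j ∈ Finset.Icc 1 (l k), Tt l θ (k + 1) * (max c 1 * (1 + P ^ q)) :=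
                  Finset.sum_le_sum hterm
              _ = (l k : ℝ) * (Tt l θ (k + 1) * (max c 1 * (1 + P ^ q))) := by
                  rw [Finset.sum_const, Nat.card_Icc]; simp [nsmul_eq_mul]
    -- step 2: ≤ Tt' * Nn' * P^q
    have hstep2 : Tt l θ (k + 1) + (l k : ℝ) * (Tt l θ (k + 1) * (max c 1 * (1 + P ^ q)))
        ≤ Tt l θ (k + 1) * Nn c l (k + 1) * P ^ q := by
      have hlF := l_le_Ff l k
      have hF := Ff_nonneg l (k + 1)
      have hNeq : Nn c l (k + 1) = 1 + 2 * max c 1 * Ff l (k + 1) := rfl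
      rw [hNeq]
      have hlk : (0:ℝ) ≤ (l k : ℝ) := Nat.cast_nonneg _
      have s2 : Tt l θ (k + 1) ≤ Tt l θ (k + 1) * P ^ q :=
        le_mul_of_one_le_right (by linarith) hPq
      have s1 : (l k : ℝ) * (Tt l θ (k + 1) * (max c 1 * (1 + P ^ q)))
          ≤ Ff l (k + 1) * (Tt l θ (k + 1) * (max c 1 * (2 * P ^ q))) := by
        apply mul_le_mul hlF _ (by nlinarith) hF
        apply mul_le_mul_of_nonneg_left _ (by linarith)
        apply mul_le_mul_of_nonneg_left _ (by linarith)
        linarith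
      nlinarith [s1, s2]
    -- step 3: P^q ≤ M^E' * Tt'^(k E') * Nn'^(k E')
    have hstep3 : P ^ q ≤ Mb a b ^ Ee q (k + 1) *
        Tt l θ (k + 1) ^ ((k : ℝ) * Ee q (k + 1)) *
        Nn c l (k + 1) ^ ((k : ℝ) * Ee q (k + 1)) := by
      have hM0 : (0:ℝ) ≤ Mb a b := by linarith
      have hT0 : (0:ℝ) ≤ Tt l θ k := by linarith
      have hN0 : (0:ℝ) ≤ Nn c l k := by linarith
      have hkE : (0:ℝ) ≤ (k : ℝ) * Ee q k := mul_nonneg (Nat.cast_nonneg _) (Ee_nonneg q k)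
      have hexp : P ^ q = Mb a b ^ (Ee q k * q) *
          Tt l θ k ^ ((k : ℝ) * Ee q k * q) * Nn c l k ^ ((k : ℝ) * Ee q k * q) := by
        rw [hPdef, Bb, Real.mul_rpow (mul_nonneg (Real.rpow_nonneg hM0 _)
            (Real.rpow_nonneg hT0 _)) (Real.rpow_nonneg hN0 _),
          Real.mul_rpow (Real.rpow_nonneg hM0 _) (Real.rpow_nonneg hT0 _),
          ← Real.rpow_mul hM0, ← Real.rpow_mul hT0, ← Real.rpow_mul hN0]
      rw [hexp]
      have hqE := qE_le q hq k hk
      have f1 : Mb a b ^ (Ee q k * q) ≤ Mb a b ^ Ee q (k + 1) :=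
        Real.rpow_le_rpow_of_exponent_le hM (by rw [mul_comm]; exact hqE)
      have hexple : (k : ℝ) * Ee q k * q ≤ (k : ℝ) * Ee q (k + 1) := by
        have : (k : ℝ) * Ee q k * q = (k : ℝ) * (q * Ee q k) := by ring
        rw [this]
        exact mul_le_mul_of_nonneg_left hqE (Nat.cast_nonneg _)
      have f2 : Tt l θ k ^ ((k : ℝ) * Ee q k * q) ≤
          Tt l θ (k + 1) ^ ((k : ℝ) * Ee q (k + 1)) := by
        calc Tt l θ k ^ ((k : ℝ) * Ee q k * q)
            ≤ Tt l θ (k + 1) ^ ((k : ℝ) * Ee q k * q) :=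
              Real.rpow_le_rpow hT0 (Tt_mono l θ k) (mul_nonneg hkE hq)
          _ ≤ Tt l θ (k + 1) ^ ((k : ℝ) * Ee q (k + 1)) :=
              Real.rpow_le_rpow_of_exponent_le hT' hexple
      have f3 : Nn c l k ^ ((k : ℝ) * Ee q k * q) ≤
          Nn c l (k + 1) ^ ((k : ℝ) * Ee q (k + 1)) := by
        calc Nn c l k ^ ((k : ℝ) * Ee q k * q)
            ≤ Nn c l (k + 1) ^ ((k : ℝ) * Ee q k * q) :=
              Real.rpow_le_rpow hN0 (Nn_mono c l k) (mul_nonneg hkE hq)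
          _ ≤ Nn c l (k + 1) ^ ((k : ℝ) * Ee q (k + 1)) :=
              Real.rpow_le_rpow_of_exponent_le hN' hexple
      have p1 : (0:ℝ) ≤ Mb a b ^ (Ee q k * q) := Real.rpow_nonneg hM0 _
      have p2 : (0:ℝ) ≤ Tt l θ k ^ ((k : ℝ) * Ee q k * q) := Real.rpow_nonneg hT0 _
      have p3 : (0:ℝ) ≤ Mb a b ^ Ee q (k + 1) := Real.rpow_nonneg hM0 _
      have p4 : (0:ℝ) ≤ Tt l θ (k + 1) ^ ((k : ℝ) * Ee q (k + 1)) :=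
        Real.rpow_nonneg (by linarith) _
      exact mul_le_mul (mul_le_mul f1 f2 p2 p3) f3 (Real.rpow_nonneg hN0 _)
        (mul_nonneg p3 p4)
    -- final assembly
    have hfin : Tt l θ (k + 1) * Nn c l (k + 1) *
        (Mb a b ^ Ee q (k + 1) * Tt l θ (k + 1) ^ ((k : ℝ) * Ee q (k + 1)) *
          Nn c l (k + 1) ^ ((k : ℝ) * Ee q (k + 1)))
        ≤ Bb q c a b l θ (k + 1) := by
      have hT'pos : (0:ℝ) < Tt l θ (k + 1) := by linarith
      have hN'pos : (0:ℝ) < Nn c l (k + 1) := by linarith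
      have e1 : Tt l θ (k + 1) * Tt l θ (k + 1) ^ ((k : ℝ) * Ee q (k + 1)) =
          Tt l θ (k + 1) ^ ((k : ℝ) * Ee q (k + 1) + 1) := by
        rw [Real.rpow_add_one (ne_of_gt hT'pos)]; ring
      have e2 : Nn c l (k + 1) * Nn c l (k + 1) ^ ((k : ℝ) * Ee q (k + 1)) =
          Nn c l (k + 1) ^ ((k : ℝ) * Ee q (k + 1) + 1) := by
        rw [Real.rpow_add_one (ne_of_gt hN'pos)]; ring
      have hexple : (k : ℝ) * Ee q (k + 1) + 1 ≤ ((k + 1 : ℕ) : ℝ) * Ee q (k + 1) := by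
        push_cast; nlinarith
      have g1 : Tt l θ (k + 1) ^ ((k : ℝ) * Ee q (k + 1) + 1) ≤
          Tt l θ (k + 1) ^ (((k + 1 : ℕ) : ℝ) * Ee q (k + 1)) :=
        Real.rpow_le_rpow_of_exponent_le hT' hexple
      have g2 : Nn c l (k + 1) ^ ((k : ℝ) * Ee q (k + 1) + 1) ≤
          Nn c l (k + 1) ^ (((k + 1 : ℕ) : ℝ) * Ee q (k + 1)) :=
        Real.rpow_le_rpow_of_exponent_le hN' hexple
      have hlhs : Tt l θ (k + 1) * Nn c l (k + 1) *
          (Mb a b ^ Ee q (k + 1) * Tt l θ (k + 1) ^ ((k : ℝ) * Ee q (k + 1)) *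
            Nn c l (k + 1) ^ ((k : ℝ) * Ee q (k + 1))) =
          Mb a b ^ Ee q (k + 1) * Tt l θ (k + 1) ^ ((k : ℝ) * Ee q (k + 1) + 1) *
            Nn c l (k + 1) ^ ((k : ℝ) * Ee q (k + 1) + 1) := by
        rw [← e1, ← e2]; ring
      rw [hlhs, Bb]
      have p3 : (0:ℝ) ≤ Mb a b ^ Ee q (k + 1) := Real.rpow_nonneg (by linarith) _
      have p4 : (0:ℝ) ≤ Tt l θ (k + 1) ^ (((k + 1 : ℕ) : ℝ) * Ee q (k + 1)) :=
        Real.rpow_nonneg (by linarith) _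
      exact mul_le_mul (mul_le_mul le_rfl g1 (Real.rpow_nonneg (le_of_lt hT'pos) _) p3)
        g2 (Real.rpow_nonneg (le_of_lt hN'pos) _) (mul_nonneg p3 p4)
    have hmid : Tt l θ (k + 1) * Nn c l (k + 1) * P ^ q ≤
        Tt l θ (k + 1) * Nn c l (k + 1) *
        (Mb a b ^ Ee q (k + 1) * Tt l θ (k + 1) ^ ((k : ℝ) * Ee q (k + 1)) *
          Nn c l (k + 1) ^ ((k : ℝ) * Ee q (k + 1))) :=
      mul_le_mul_of_nonneg_left hstep3 (by nlinarith)
    linarith [hnet, hstep2, hmid, hfin]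

end NeuronAux

/-- a priori bound for neuron outputs. If the activation `A` satisfies
`|A x| ≤ c (1 + |x|^q)`, then every neuron output at layer `k` is bounded on `[a,b]^{l₀}`
by the explicit expression from the paper. -/
theorem neuron_output_bound
    (q c a b : ℝ) (hq : 0 ≤ q) (hab : a < b)
    (A : ℝ → ℝ) (hA : ∀ x : ℝ, |A x| ≤ c * (1 + |x| ^ q))
    (L : ℕ) (hL : 1 ≤ L) (l : ℕ → ℕ) (hl : ∀ i, 1 ≤ l i)
    (k : ℕ) (hk1 : 1 ≤ k) (hkL : k ≤ L)
    (θ : ℕ → ℝ) (x : ℕ → ℝ) (hx : ∀ j ∈ Finset.Icc 1 (l 0), x j ∈ Set.Icc a b)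
    (i : ℕ) (hi : i ∈ Finset.Icc 1 (l k)) :
    |net A l θ x k i| ≤
      (max 1 (max |a| |b|)) ^ (max 1 (q ^ (k - 1))) *
        (max 1 (Finset.fold max 0 (fun j => |θ j|) (Finset.Icc 1 (dk l k)))) ^
          ((k : ℝ) * max 1 (q ^ (k - 1))) *
        (1 + 2 * max c 1 * (Finset.fold max 0 (fun h => (l h : ℝ)) (Finset.range k))) ^
          ((k : ℝ) * max 1 (q ^ (k - 1))) := by
  have hx' : ∀ j ∈ Finset.Icc 1 (l 0), |x j| ≤ Mb a b := by
    intro j hj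
    obtain ⟨h1, h2⟩ := hx j hj
    refine le_trans ?_ (le_max_right 1 (max |a| |b|))
    rw [abs_le]
    constructor
    · have : -|a| ≤ a := neg_abs_le a
      have h3 : |a| ≤ max |a| |b| := le_max_left _ _
      linarith
    · have : b ≤ |b| := le_abs_self b
      have h3 : |b| ≤ max |a| |b| := le_max_right _ _
      linarith
  exact main_bound q c a b hq A hA l hl θ x hx' k hk1 i hi
end

section
/- Let 𝔸: ℝ → ℝ be c-Lipschitz, a < b. For a feedforward neural network with activation 𝔸, architecture ℓ = (ℓ₀,…,ℓ_L) with ℓ₀ = d, ℓ_L = 1, and parameter vectors θ, ϑ ∈ ℝ^{𝔡(ℓ)}, the realization functions satisfy for all x ∈ [a,b]^d: |N_θ(x) − N_ϑ(x)| ≤ max{1,|a|,|b|} · [(3+|𝔸(0)|)·max{c,1}·max{ℓ₀,…,ℓ_{L−1}}]^L · [max_j max{1,|θ_j|,|ϑ_j|}]^L · max_j |θ_j − ϑ_j|. -/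
open MeasureTheory Finset

namespace ParamLipAux

/-- Post-activation value of neuron `j` at layer `v` (at layer 0, the input itself). -/
noncomputable def post (A : ℝ → ℝ) (l : ℕ → ℕ) (θ x : ℕ → ℝ) (v j : ℕ) : ℝ :=
  if v = 0 then x j else A (net A l θ x v j)

lemma net_succ (A : ℝ → ℝ) (l : ℕ → ℕ) (θ x : ℕ → ℝ) (v i : ℕ) :
    net A l θ x (v+1) i =
      θ (l (v+1) * l v + i + dk l v) +
      ∑ j ∈ Finset.Icc 1 (l v), θ ((i-1) * l v + j + dk l v) * post A l θ x v j := rfl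

lemma post_succ (A : ℝ → ℝ) (l : ℕ → ℕ) (θ x : ℕ → ℝ) (v j : ℕ) :
    post A l θ x (v+1) j = A (net A l θ x (v+1) j) := by
  simp [post]

lemma olm {x y : ℝ} (hx : 1 ≤ x) (hy : 1 ≤ y) : 1 ≤ x * y := one_le_mul_of_one_le_of_one_le hx hy

lemma arith1 (a0 c cb P Q lv Lm : ℝ) (h1 : 0 ≤ a0) (h2 : 0 ≤ c) (h3 : c ≤ cb) (h4 : 1 ≤ cb)
    (h5 : 1 ≤ P) (h6 : 1 ≤ Q) (h7 : 1 ≤ lv) (h8 : lv ≤ Lm) :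
    a0 + c * (P + lv * (P * Q)) ≤ Q * ((3 + a0) * cb * Lm) * P := by
  have hLm : 1 ≤ Lm := le_trans h7 h8
  have hall : (1:ℝ) ≤ (cb * Lm) * (P * Q) := olm (olm h4 hLm) (olm h5 h6)
  have k1 : c * lv ≤ cb * Lm := mul_le_mul h3 h8 (by linarith) (by linarith)
  have k2 : a0 ≤ a0 * ((cb * Lm) * (P * Q)) := le_mul_of_one_le_right h1 hall
  have k3 : c * P ≤ (cb * (Lm * Q)) * P := by
    have : cb ≤ cb * (Lm * Q) := le_mul_of_one_le_right (by linarith) (olm hLm h6)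
    nlinarith
  have k4 : (c * lv) * (P * Q) ≤ (cb * Lm) * (P * Q) :=
    mul_le_mul_of_nonneg_right k1 (by positivity)
  nlinarith

lemma arith2 (a0 c' cb P Q lv Lm D : ℝ) (h1 : 0 ≤ a0) (h2 : 0 ≤ c') (h3 : c' ≤ cb) (h4 : 1 ≤ cb)
    (h5 : 1 ≤ P) (h6 : 1 ≤ Q) (h7 : 1 ≤ lv) (h8 : lv ≤ Lm) (h9 : 0 ≤ D) :
    c' * (D + lv * (Q * D + P * (Q * D))) ≤ Q * ((3 + a0) * cb * Lm) * P * D := by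
  have hLm : 1 ≤ Lm := le_trans h7 h8
  have k0 : 0 ≤ a0 * ((cb * Lm) * (P * Q)) * D := by positivity
  have k1 : c' * lv ≤ cb * Lm := mul_le_mul h3 h8 (by linarith) (by linarith)
  have k2 : c' * D ≤ ((cb * Lm) * (P * Q)) * D := by
    exact mul_le_mul_of_nonneg_right
      (by nlinarith [le_mul_of_one_le_right (le_trans zero_le_one h4) (olm hLm (olm h5 h6))]) h9
  have k3 : (c' * lv) * (Q * D) ≤ (cb * Lm) * (P * (Q * D)) := by
    have t1 : (c' * lv) * (Q * D) ≤ (cb * Lm) * (Q * D) :=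
      mul_le_mul_of_nonneg_right k1 (by positivity)
    have t2 : (cb * Lm) * (Q * D) ≤ (cb * Lm) * (P * (Q * D)) := by
      apply mul_le_mul_of_nonneg_left _ (by nlinarith : (0:ℝ) ≤ cb * Lm)
      nlinarith [mul_le_mul_of_nonneg_right h5 (mul_nonneg (by linarith : (0:ℝ) ≤ Q) h9)]
    linarith
  have k4 : (c' * lv) * (P * (Q * D)) ≤ (cb * Lm) * (P * (Q * D)) :=
    mul_le_mul_of_nonneg_right k1 (by positivity)
  nlinarith

end ParamLipAux

open ParamLipAux in
/-- Lipschitz continuity of the realization in the parameters.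
For a `c`-Lipschitz activation `A` and architecture `l = (d, l₁, …, l_{L-1}, 1)`,
the realizations with parameters `θ` and `ϑ` satisfy the stated explicit bound on `[a,b]^d`. -/
theorem realization_param_lipschitz
    (c a b : ℝ) (hab : a < b)
    (A : ℝ → ℝ) (hA : ∀ x y : ℝ, |A x - A y| ≤ c * |x - y|)
    (d L : ℕ) (hd : 1 ≤ d) (hL : 1 ≤ L)
    (l : ℕ → ℕ) (hl0 : l 0 = d) (hlL : l L = 1) (hl : ∀ i, 1 ≤ l i)
    (θ ϑ : ℕ → ℝ) (x : ℕ → ℝ) (hx : ∀ j ∈ Finset.Icc 1 d, x j ∈ Set.Icc a b) :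
    |net A l θ x L 1 - net A l ϑ x L 1| ≤
      max 1 (max |a| |b|) *
        ((3 + |A 0|) * max c 1 * (Finset.fold max 0 (fun h => (l h : ℝ)) (Finset.range L))) ^ L *
        (Finset.fold max 1 (fun j => max |θ j| |ϑ j|) (Finset.Icc 1 (dk l L))) ^ L *
        (Finset.fold max 0 (fun j => |θ j - ϑ j|) (Finset.Icc 1 (dk l L))) := by
  have hc0 : 0 ≤ c := by
    have h := hA 1 0
    simp only [sub_zero, abs_one, mul_one] at h
    linarith [abs_nonneg (A 1 - A 0)]
  set Lm : ℝ := Finset.fold max 0 (fun h => (l h : ℝ)) (Finset.range L) with hLmdef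
  set P : ℝ := Finset.fold max 1 (fun j => max |θ j| |ϑ j|) (Finset.Icc 1 (dk l L)) with hPdef
  set D : ℝ := Finset.fold max 0 (fun j => |θ j - ϑ j|) (Finset.Icc 1 (dk l L)) with hDdef
  set M : ℝ := max 1 (max |a| |b|) with hMdef
  set cb : ℝ := max c 1 with hcbdef
  set K : ℝ := (3 + |A 0|) * cb * Lm with hKdef
  have hM1 : (1:ℝ) ≤ M := le_max_left _ _
  have hcb1 : (1:ℝ) ≤ cb := le_max_right _ _
  have hccb : c ≤ cb := le_max_left _ _
  have hP1 : (1:ℝ) ≤ P := (Finset.le_fold_max _).mpr (Or.inl le_rfl)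
  have hD0 : (0:ℝ) ≤ D := (Finset.le_fold_max _).mpr (Or.inl le_rfl)
  have hDle : ∀ j ∈ Finset.Icc 1 (dk l L), |θ j - ϑ j| ≤ D :=
    fun j hj => (Finset.le_fold_max _).mpr (Or.inr ⟨j, hj, le_rfl⟩)
  have hθP : ∀ j ∈ Finset.Icc 1 (dk l L), |θ j| ≤ P :=
    fun j hj => le_trans (le_max_left _ _) ((Finset.le_fold_max _).mpr (Or.inr ⟨j, hj, le_rfl⟩))
  have hϑP : ∀ j ∈ Finset.Icc 1 (dk l L), |ϑ j| ≤ P :=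
    fun j hj => le_trans (le_max_right _ _) ((Finset.le_fold_max _).mpr (Or.inr ⟨j, hj, le_rfl⟩))
  have hlLm : ∀ v, v < L → (l v : ℝ) ≤ Lm :=
    fun v hv => (Finset.le_fold_max _).mpr (Or.inr ⟨v, Finset.mem_range.mpr hv, le_rfl⟩)
  have hl1 : ∀ v, (1:ℝ) ≤ (l v : ℝ) := fun v => by exact_mod_cast hl v
  have hLm1 : (1:ℝ) ≤ Lm := le_trans (hl1 0) (hlLm 0 hL)
  have hA0 : (0:ℝ) ≤ |A 0| := abs_nonneg _
  have hK1 : (1:ℝ) ≤ K := by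
    rw [hKdef]
    nlinarith [olm (by linarith : (1:ℝ) ≤ 3 + |A 0|) (olm hcb1 hLm1)]
  have hxb : ∀ j, 1 ≤ j → j ≤ d → |x j| ≤ M := by
    intro j h1 h2
    have hj := hx j (Finset.mem_Icc.mpr ⟨h1, h2⟩)
    have h3 : |x j| ≤ max |a| |b| := by
      rw [abs_le]
      refine ⟨?_, ?_⟩
      · calc -(max |a| |b|) ≤ -|a| := neg_le_neg (le_max_left _ _)
          _ ≤ a := neg_abs_le a
          _ ≤ x j := hj.1
      · calc x j ≤ b := hj.2
          _ ≤ |b| := le_abs_self b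
          _ ≤ max |a| |b| := le_max_right _ _
    exact le_trans h3 (le_max_right _ _)
  -- index lemmas
  have hdk_succ : ∀ v, dk l (v+1) = dk l v + l (v+1) * (l v + 1) :=
    fun v => Finset.sum_range_succ _ v
  have hdkm : ∀ v, v < L → dk l (v+1) ≤ dk l L := fun v hv =>
    Finset.sum_le_sum_of_subset (Finset.range_subset_range.mpr hv)
  have hbias : ∀ v, v < L → ∀ i, 1 ≤ i → i ≤ l (v+1) →
      l (v+1) * l v + i + dk l v ∈ Finset.Icc 1 (dk l L) := by
    intro v hv i hi1 hi2
    have h1 := hdkm v hv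
    have h2 := hdk_succ v
    have h3 : l (v+1) * (l v + 1) = l (v+1) * l v + l (v+1) := by ring
    simp only [Finset.mem_Icc]; omega
  have hwt : ∀ v, v < L → ∀ i j, 1 ≤ i → i ≤ l (v+1) → 1 ≤ j → j ≤ l v →
      (i-1) * l v + j + dk l v ∈ Finset.Icc 1 (dk l L) := by
    intro v hv i j hi1 hi2 hj1 hj2
    have h1 := hdkm v hv
    have h2 := hdk_succ v
    have h3 : l (v+1) * (l v + 1) = l (v+1) * l v + l (v+1) := by ring
    have h4 : (i-1) * l v ≤ (l (v+1) - 1) * l v := Nat.mul_le_mul_right _ (by omega)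
    have h5 : (l (v+1) - 1) * l v = l (v+1) * l v - l v := Nat.sub_one_mul _ _
    have h6 : l v ≤ l (v+1) * l v := Nat.le_mul_of_pos_left _ (hl (v+1))
    simp only [Finset.mem_Icc]; omega
  have hAt : ∀ t : ℝ, |A t| ≤ |A 0| + c * |t| := by
    intro t
    have h1 := hA t 0
    rw [sub_zero] at h1
    have h2 : |A t| - |A 0| ≤ |A t - A 0| := abs_sub_abs_le_abs_sub _ _
    linarith
  -- generic pre-activation size bound
  have pre_bound : ∀ (η : ℕ → ℝ), (∀ j ∈ Finset.Icc 1 (dk l L), |η j| ≤ P) →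
      ∀ v, v < L → ∀ Q : ℝ, 0 ≤ Q →
      (∀ j, 1 ≤ j → j ≤ l v → |post A l η x v j| ≤ Q) →
      ∀ i, 1 ≤ i → i ≤ l (v+1) →
      |net A l η x (v+1) i| ≤ P + (l v : ℝ) * (P * Q) := by
    intro η hη v hv Q hQ hpost i hi1 hi2
    rw [net_succ]
    refine le_trans (abs_add_le _ _) ?_
    have h1 : |η (l (v+1) * l v + i + dk l v)| ≤ P := hη _ (hbias v hv i hi1 hi2)
    have h2 : |∑ j ∈ Finset.Icc 1 (l v), η ((i-1) * l v + j + dk l v) * post A l η x v j|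
        ≤ ∑ j ∈ Finset.Icc 1 (l v), P * Q := by
      refine le_trans (Finset.abs_sum_le_sum_abs _ _) (Finset.sum_le_sum ?_)
      intro j hj
      have hj' := Finset.mem_Icc.mp hj
      rw [abs_mul]
      exact mul_le_mul (hη _ (hwt v hv i j hi1 hi2 hj'.1 hj'.2)) (hpost j hj'.1 hj'.2)
        (abs_nonneg _) (by linarith)
    rw [Finset.sum_const, Nat.card_Icc, nsmul_eq_mul] at h2
    simp only [Nat.add_sub_cancel] at h2
    linarith
  -- generic pre-activation difference bound
  have pre_diff : ∀ v, v < L → ∀ Q : ℝ, 0 ≤ Q →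
      (∀ j, 1 ≤ j → j ≤ l v → |post A l θ x v j| ≤ Q ∧
        |post A l θ x v j - post A l ϑ x v j| ≤ Q * D) →
      ∀ i, 1 ≤ i → i ≤ l (v+1) →
      |net A l θ x (v+1) i - net A l ϑ x (v+1) i| ≤ D + (l v : ℝ) * (Q * D + P * (Q * D)) := by
    intro v hv Q hQ hpost i hi1 hi2
    rw [net_succ, net_succ]
    have key : (θ (l (v+1) * l v + i + dk l v) +
        ∑ j ∈ Finset.Icc 1 (l v), θ ((i-1) * l v + j + dk l v) * post A l θ x v j) -
        (ϑ (l (v+1) * l v + i + dk l v) +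
        ∑ j ∈ Finset.Icc 1 (l v), ϑ ((i-1) * l v + j + dk l v) * post A l ϑ x v j) =
        (θ (l (v+1) * l v + i + dk l v) - ϑ (l (v+1) * l v + i + dk l v)) +
        ∑ j ∈ Finset.Icc 1 (l v), (θ ((i-1) * l v + j + dk l v) * post A l θ x v j -
          ϑ ((i-1) * l v + j + dk l v) * post A l ϑ x v j) := by
      rw [Finset.sum_sub_distrib]; ring
    rw [key]
    refine le_trans (abs_add_le _ _) ?_
    have h1 : |θ (l (v+1) * l v + i + dk l v) - ϑ (l (v+1) * l v + i + dk l v)| ≤ D :=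
      hDle _ (hbias v hv i hi1 hi2)
    have h2 : |∑ j ∈ Finset.Icc 1 (l v), (θ ((i-1) * l v + j + dk l v) * post A l θ x v j -
          ϑ ((i-1) * l v + j + dk l v) * post A l ϑ x v j)|
        ≤ ∑ _j ∈ Finset.Icc 1 (l v), (Q * D + P * (Q * D)) := by
      refine le_trans (Finset.abs_sum_le_sum_abs _ _) (Finset.sum_le_sum ?_)
      intro j hj
      have hj' := Finset.mem_Icc.mp hj
      have hmem := hwt v hv i j hi1 hi2 hj'.1 hj'.2
      have e : θ ((i-1) * l v + j + dk l v) * post A l θ x v j -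
          ϑ ((i-1) * l v + j + dk l v) * post A l ϑ x v j =
          (θ ((i-1) * l v + j + dk l v) - ϑ ((i-1) * l v + j + dk l v)) * post A l θ x v j +
          ϑ ((i-1) * l v + j + dk l v) * (post A l θ x v j - post A l ϑ x v j) := by ring
      rw [e]
      refine le_trans (abs_add_le _ _) ?_
      rw [abs_mul, abs_mul]
      have t1 : |θ ((i-1) * l v + j + dk l v) - ϑ ((i-1) * l v + j + dk l v)| *
          |post A l θ x v j| ≤ D * Q :=
        mul_le_mul (hDle _ hmem) (hpost j hj'.1 hj'.2).1 (abs_nonneg _) hD0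
      have t2 : |ϑ ((i-1) * l v + j + dk l v)| * |post A l θ x v j - post A l ϑ x v j|
          ≤ P * (Q * D) :=
        mul_le_mul (hϑP _ hmem) (hpost j hj'.1 hj'.2).2 (abs_nonneg _) (by linarith)
      nlinarith
    rw [Finset.sum_const, Nat.card_Icc, nsmul_eq_mul] at h2
    simp only [Nat.add_sub_cancel] at h2
    linarith
  -- the main induction
  have main : ∀ v, v < L → ∀ j, 1 ≤ j → j ≤ l v →
      |post A l θ x v j| ≤ M * K^v * P^v ∧ |post A l ϑ x v j| ≤ M * K^v * P^v ∧
      |post A l θ x v j - post A l ϑ x v j| ≤ (M * K^v * P^v) * D := by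
    intro v
    induction v with
    | zero =>
      intro _ j hj1 hj2
      have hj2' : j ≤ d := by rw [hl0] at hj2; exact hj2
      have hxj := hxb j hj1 hj2'
      have hp1 : post A l θ x 0 j = x j := rfl
      have hp2 : post A l ϑ x 0 j = x j := rfl
      rw [hp1, hp2, pow_zero, pow_zero, mul_one, mul_one, sub_self, abs_zero]
      exact ⟨hxj, hxj, mul_nonneg (by linarith) hD0⟩
    | succ v ih =>
      intro hv j hj1 hj2
      have hv' : v < L := Nat.lt_of_succ_lt hv
      have hQ1 : (1:ℝ) ≤ M * K^v * P^v :=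
        olm (olm hM1 (one_le_pow₀ hK1)) (one_le_pow₀ hP1)
      have hQ0 : (0:ℝ) ≤ M * K^v * P^v := by linarith
      have ihθ : ∀ j, 1 ≤ j → j ≤ l v → |post A l θ x v j| ≤ M * K^v * P^v :=
        fun j h1 h2 => (ih hv' j h1 h2).1
      have ihϑ : ∀ j, 1 ≤ j → j ≤ l v → |post A l ϑ x v j| ≤ M * K^v * P^v :=
        fun j h1 h2 => (ih hv' j h1 h2).2.1
      have hpreθ := pre_bound θ hθP v hv' _ hQ0 ihθ j hj1 hj2
      have hpreϑ := pre_bound ϑ hϑP v hv' _ hQ0 ihϑ j hj1 hj2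
      have hpred := pre_diff v hv' _ hQ0
        (fun j h1 h2 => ⟨(ih hv' j h1 h2).1, (ih hv' j h1 h2).2.2⟩) j hj1 hj2
      have harith1 : |A 0| + c * (P + (l v:ℝ) * (P * (M * K^v * P^v))) ≤
          (M * K^v * P^v) * ((3 + |A 0|) * cb * Lm) * P :=
        arith1 _ _ _ _ _ _ _ hA0 hc0 hccb hcb1 hP1 hQ1 (hl1 v) (hlLm v hv')
      have hsz : ∀ t : ℝ, |t| ≤ P + (l v : ℝ) * (P * (M * K^v * P^v)) →
          |A t| ≤ M * K^(v+1) * P^(v+1) := by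
        intro t ht
        have h1 := hAt t
        have h3 : c * |t| ≤ c * (P + (l v:ℝ) * (P * (M * K^v * P^v))) :=
          mul_le_mul_of_nonneg_left ht hc0
        calc |A t| ≤ |A 0| + c * |t| := h1
          _ ≤ |A 0| + c * (P + (l v:ℝ) * (P * (M * K^v * P^v))) := by linarith
          _ ≤ (M * K^v * P^v) * ((3 + |A 0|) * cb * Lm) * P := harith1
          _ = M * K^(v+1) * P^(v+1) := by rw [← hKdef, pow_succ, pow_succ]; ring
      refine ⟨?_, ?_, ?_⟩
      · rw [post_succ]; exact hsz _ hpreθ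
      · rw [post_succ]; exact hsz _ hpreϑ
      · rw [post_succ, post_succ]
        have h1 := hA (net A l θ x (v+1) j) (net A l ϑ x (v+1) j)
        have h3 : c * |net A l θ x (v+1) j - net A l ϑ x (v+1) j| ≤
            c * (D + (l v:ℝ) * ((M * K^v * P^v) * D + P * ((M * K^v * P^v) * D))) :=
          mul_le_mul_of_nonneg_left hpred hc0
        have h2 : c * (D + (l v:ℝ) * ((M * K^v * P^v) * D + P * ((M * K^v * P^v) * D))) ≤
            (M * K^v * P^v) * ((3 + |A 0|) * cb * Lm) * P * D :=
          arith2 _ _ _ _ _ _ _ _ hA0 hc0 hccb hcb1 hP1 hQ1 (hl1 v) (hlLm v hv') hD0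
        calc |A (net A l θ x (v+1) j) - A (net A l ϑ x (v+1) j)|
            ≤ c * |net A l θ x (v+1) j - net A l ϑ x (v+1) j| := h1
          _ ≤ (M * K^v * P^v) * ((3 + |A 0|) * cb * Lm) * P * D := le_trans h3 h2
          _ = M * K^(v+1) * P^(v+1) * D := by rw [← hKdef, pow_succ, pow_succ]; ring
  -- conclude
  obtain ⟨V, rfl⟩ : ∃ V, L = V + 1 := ⟨L - 1, by omega⟩
  have hVL : V < V + 1 := Nat.lt_succ_self _
  have hQ1 : (1:ℝ) ≤ M * K^V * P^V :=
    olm (olm hM1 (one_le_pow₀ hK1)) (one_le_pow₀ hP1)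
  have hpred := pre_diff V hVL _ (by linarith : (0:ℝ) ≤ M * K^V * P^V)
    (fun j h1 h2 => ⟨(main V hVL j h1 h2).1, (main V hVL j h1 h2).2.2⟩) 1 le_rfl (hl (V+1))
  have h2 : (1:ℝ) * (D + (l V:ℝ) * ((M * K^V * P^V) * D + P * ((M * K^V * P^V) * D))) ≤
      (M * K^V * P^V) * ((3 + |A 0|) * cb * Lm) * P * D :=
    arith2 _ _ _ _ _ _ _ _ hA0 zero_le_one hcb1 hcb1 hP1 hQ1 (hl1 V) (hlLm V hVL) hD0
  calc |net A l θ x (V+1) 1 - net A l ϑ x (V+1) 1|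
      ≤ D + (l V:ℝ) * ((M * K^V * P^V) * D + P * ((M * K^V * P^V) * D)) := hpred
    _ ≤ (M * K^V * P^V) * ((3 + |A 0|) * cb * Lm) * P * D := by linarith
    _ = M * K^(V+1) * P^(V+1) * D := by rw [← hKdef, pow_succ, pow_succ]; ring
end

section
/- Let 𝔸 ∈ C¹(ℝ,ℝ), a < b. For a feedforward network with activation 𝔸, architecture ℓ = (ℓ₀,…,ℓ_L) with ℓ₀ = d, ℓ_L = 1, and parameters θ, the gradient with respect to the parameters of the realization satisfies for all x ∈ [a,b]^d: ‖∇_θ N_θ(x)‖ ≤ max{1,|a|,|b|} · (3+|𝔸(0)|)^L · [max{ℓ₀,…,ℓ_{L−1}} · max{1, max_j |θ_j|} · max{1, sup_{x∈ℝ}|𝔸′(x)|}]^L. -/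
open MeasureTheory Finset

/-!
By induction on the layer `v`, each neuron `ψ ↦ net A l (toInput n ψ) x v i`, viewed as a function
of the parameters, is differentiable at `θ` with value and derivative both bounded by
`ξ * ((3 + |A 0|) * M * T * K) ^ v`; here `ξ`, `T`, `M`, `K` bound the input, the
parameters, the widths and `|A'|`. A neuron of layer `v + 1` has the form `c ψ + ∑ j, w j ψ * g j ψ`
where `c`, `w j` are coordinate functionals (norm `≤ 1`, value `≤ T`) and `g j` are the activated
neurons of layer `v`, so the mean value bound `|A t| ≤ |A 0| + K * |t|` and the product rule cost a
factor of at most `(3 + |A 0|) * M * T * K` per layer.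
-/

noncomputable def toInputCLM (n j : ℕ) : StrongDual ℝ (EuclideanSpace ℝ (Fin n)) :=
  if h : 0 < j ∧ j ≤ n then EuclideanSpace.proj (⟨j - 1, by omega⟩ : Fin n) else 0

lemma toInputCLM_apply (n j : ℕ) (ψ : EuclideanSpace ℝ (Fin n)) :
    toInputCLM n j ψ = toInput n ψ j := by
  unfold toInputCLM toInput
  split_ifs <;> rfl

lemma norm_toInputCLM_le_one (n j : ℕ) : ‖toInputCLM n j‖ ≤ 1 := by
  refine ContinuousLinearMap.opNorm_le_bound _ zero_le_one fun ψ => ?_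
  rw [one_mul, toInputCLM_apply, toInput]
  split_ifs
  · exact PiLp.norm_apply_le ψ _
  · simp

lemma abs_toInput_le_fold_max (n j : ℕ) (ψ : EuclideanSpace ℝ (Fin n)) :
    |toInput n ψ j| ≤ univ.fold max 0 (fun k : Fin n => |ψ k|) := by
  unfold toInput
  split_ifs
  · exact (le_fold_max _).2 (Or.inr ⟨_, mem_univ _, le_rfl⟩)
  · rw [abs_zero]
    exact (le_fold_max _).2 (Or.inl le_rfl)

lemma norm_gradient_eq_norm_fderiv {F : Type*} [NormedAddCommGroup F] [InnerProductSpace ℝ F]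
    [CompleteSpace F] (f : F → ℝ) (θ : F) : ‖gradient f θ‖ = ‖fderiv ℝ f θ‖ :=
  (InnerProductSpace.toDual ℝ F).symm.norm_map _

lemma abs_le_abs_apply_zero_add_mul_abs {A : ℝ → ℝ} {K : ℝ} (hA : Differentiable ℝ A)
    (hK : ∀ t, |deriv A t| ≤ K) (t : ℝ) : |A t| ≤ |A 0| + K * |t| := by
  have := convex_univ.norm_image_sub_le_of_norm_deriv_le (fun s _ => hA s) (fun s _ => hK s)
    (Set.mem_univ 0) (Set.mem_univ t)
  simp only [Real.norm_eq_abs, sub_zero] at this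
  linarith [abs_sub_abs_le_abs_sub (A t) (A 0)]

lemma layer_bound_le_growth {a₀ T K β m M : ℝ} (ha₀ : 0 ≤ a₀) (hT : 0 ≤ T) (hK : 1 ≤ K) (hβ : 1 ≤ β)
    (hm : 1 ≤ m) (hmM : m ≤ M) :
    T * (1 + m * (a₀ + K * β + K * β)) ≤ (3 + a₀) * M * T * K * β := by
  have hKβ : 1 ≤ K * β := one_le_mul_of_one_le_of_one_le hK hβ
  have hM : 1 ≤ M := hm.trans hmM
  have hMKβ : 1 ≤ M * (K * β) := one_le_mul_of_one_le_of_one_le hM hKβ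
  have ha₀KB : M * a₀ ≤ M * (a₀ * (K * β)) := by gcongr; exact le_mul_of_one_le_right ha₀ hKβ
  calc T * (1 + m * (a₀ + K * β + K * β)) ≤ T * (1 + M * (a₀ + K * β + K * β)) := by
        gcongr
    _ ≤ T * (M * (K * β) + M * (a₀ * (K * β)) + 2 * (M * (K * β))) := by
        gcongr T * ?_
        linarith
    _ = (3 + a₀) * M * T * K * β := by ring

section Bounds

variable {E : Type*} [NormedAddCommGroup E] [NormedSpace ℝ E]

def ValueDerivBoundedAt (f : E → ℝ) (θ : E) (γ δ : ℝ) : Prop :=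
  DifferentiableAt ℝ f θ ∧ |f θ| ≤ γ ∧ ‖fderiv ℝ f θ‖ ≤ δ

lemma ValueDerivBoundedAt.mono {f : E → ℝ} {θ : E} {γ δ γ' δ' : ℝ}
    (hf : ValueDerivBoundedAt f θ γ δ) (hγ : γ ≤ γ') (hδ : δ ≤ δ') :
    ValueDerivBoundedAt f θ γ' δ' :=
  ⟨hf.1, hf.2.1.trans hγ, hf.2.2.trans hδ⟩

lemma valueDerivBoundedAt_const (c : ℝ) (θ : E) {γ δ : ℝ} (hγ : |c| ≤ γ) (hδ : 0 ≤ δ) :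
    ValueDerivBoundedAt (fun _ : E => c) θ γ δ :=
  ⟨differentiableAt_const c, hγ, by rwa [fderiv_const_apply, norm_zero]⟩

lemma ValueDerivBoundedAt.comp {A : ℝ → ℝ} {K : ℝ} {f : E → ℝ} {θ : E} {γ δ : ℝ}
    (hf : ValueDerivBoundedAt f θ γ δ) (hA : Differentiable ℝ A) (hK : ∀ t, |deriv A t| ≤ K) :
    ValueDerivBoundedAt (A ∘ f) θ (|A 0| + K * γ) (K * δ) := by
  have hK0 : 0 ≤ K := (abs_nonneg _).trans (hK 0)
  have hderiv := (hA (f θ)).hasDerivAt.comp_hasFDerivAt θ hf.1.hasFDerivAt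
  refine ⟨hderiv.differentiableAt, ?_, ?_⟩
  · exact (abs_le_abs_apply_zero_add_mul_abs hA hK _).trans (by gcongr; exact hf.2.1)
  · rw [hderiv.fderiv, norm_smul, Real.norm_eq_abs]
    exact mul_le_mul (hK _) hf.2.2 (norm_nonneg _) hK0

lemma valueDerivBoundedAt_add_sum_mul {ι : Type*} {s : Finset ι} {c : StrongDual ℝ E}
    {w : ι → StrongDual ℝ E} {g : ι → E → ℝ} {θ : E} {T γ δ : ℝ} (hT : 1 ≤ T)
    (hc : ‖c‖ ≤ 1) (hcθ : |c θ| ≤ T) (hw : ∀ j ∈ s, ‖w j‖ ≤ 1) (hwθ : ∀ j ∈ s, |w j θ| ≤ T)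
    (hg : ∀ j ∈ s, ValueDerivBoundedAt (g j) θ γ δ) :
    ValueDerivBoundedAt (fun ψ => c ψ + ∑ j ∈ s, w j ψ * g j ψ) θ
      (T * (1 + #s * (γ + δ))) (T * (1 + #s * (γ + δ))) := by
  have hbound : T + ∑ _j ∈ s, T * (γ + δ) = T * (1 + #s * (γ + δ)) := by
    rw [sum_const, nsmul_eq_mul]; ring
  have hderiv : HasFDerivAt (fun ψ => c ψ + ∑ j ∈ s, w j ψ * g j ψ)
      (c + ∑ j ∈ s, (w j θ • fderiv ℝ (g j) θ + g j θ • w j)) θ :=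
    c.hasFDerivAt.add <| HasFDerivAt.fun_sum fun j hj =>
      (w j).hasFDerivAt.mul (hg j hj).1.hasFDerivAt
  refine ⟨hderiv.differentiableAt, ?_, ?_⟩
  · rw [← hbound]
    refine (abs_add_le _ _).trans (add_le_add hcθ ((abs_sum_le_sum_abs _ _).trans ?_))
    refine sum_le_sum fun j hj => ?_
    obtain ⟨-, hgθ, hG⟩ := hg j hj
    rw [abs_mul]
    have hδ := (norm_nonneg _).trans hG
    exact mul_le_mul (hwθ j hj) (hgθ.trans (by linarith)) (abs_nonneg _) (by linarith)
  · rw [hderiv.fderiv, ← hbound]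
    refine (norm_add_le _ _).trans (add_le_add (hc.trans hT) ((norm_sum_le _ _).trans ?_))
    refine sum_le_sum fun j hj => (norm_add_le _ _).trans ?_
    obtain ⟨-, hgθ, hG⟩ := hg j hj
    rw [norm_smul, norm_smul, Real.norm_eq_abs, Real.norm_eq_abs]
    have hγ := (abs_nonneg _).trans hgθ
    calc |w j θ| * ‖fderiv ℝ (g j) θ‖ + |g j θ| * ‖w j‖ ≤ T * δ + γ * 1 := by
          gcongr
          exacts [hwθ j hj, hw j hj]
      _ ≤ T * (γ + δ) := by nlinarith

end Bounds

section Network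

variable {A : ℝ → ℝ} {l : ℕ → ℕ} {n : ℕ} {x : ℕ → ℝ}

variable (A l n x) in
noncomputable def layerInput (v j : ℕ) : EuclideanSpace ℝ (Fin n) → ℝ :=
  if v = 0 then fun _ => x j else A ∘ fun ψ => net A l (toInput n ψ) x v j

lemma net_toInput_succ (v i : ℕ) :
    (fun ψ : EuclideanSpace ℝ (Fin n) => net A l (toInput n ψ) x (v + 1) i) = fun ψ =>
      toInputCLM n (l (v + 1) * l v + i + dk l v) ψ +
        ∑ j ∈ Icc 1 (l v), toInputCLM n ((i - 1) * l v + j + dk l v) ψ * layerInput A l n x v j ψ := by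
  funext ψ
  simp only [net, toInputCLM_apply, layerInput]
  split_ifs <;> rfl

theorem valueDerivBoundedAt_net {θ : EuclideanSpace ℝ (Fin n)} {K M T ξ : ℝ} {L : ℕ}
    (hA : Differentiable ℝ A) (hK1 : 1 ≤ K) (hK : ∀ t, |deriv A t| ≤ K)
    (hl : ∀ v, 1 ≤ l v) (hM : ∀ v < L, (l v : ℝ) ≤ M)
    (hT1 : 1 ≤ T) (hT : ∀ p, |toInput n θ p| ≤ T)
    (hξ : 1 ≤ ξ) (hx : ∀ j ∈ Icc 1 (l 0), |x j| ≤ ξ) :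
    ∀ v ≤ L, ∀ i ∈ Icc 1 (l v),
      ValueDerivBoundedAt (fun ψ => net A l (toInput n ψ) x v i) θ
        (ξ * ((3 + |A 0|) * M * T * K) ^ v) (ξ * ((3 + |A 0|) * M * T * K) ^ v) := by
  intro v
  induction v with
  | zero =>
    intro _ i hi
    exact valueDerivBoundedAt_const (x i) θ (by simpa using hx i hi) (by linarith)
  | succ v ih =>
    intro hv i _
    set β := ξ * ((3 + |A 0|) * M * T * K) ^ v
    have hMv : (l v : ℝ) ≤ M := hM v (by omega)
    have hlv : 1 ≤ (l v : ℝ) := Nat.one_le_cast.2 (hl v)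
    have hβ : 1 ≤ β := by
      have hC : 1 ≤ 3 + |A 0| := by linarith [abs_nonneg (A 0)]
      have : 1 ≤ (3 + |A 0|) * M * T * K := one_le_mul_of_one_le_of_one_le
        (one_le_mul_of_one_le_of_one_le (one_le_mul_of_one_le_of_one_le hC (hlv.trans hMv)) hT1) hK1
      exact one_le_mul_of_one_le_of_one_le hξ (one_le_pow₀ this)
    have hinput : ∀ j ∈ Icc 1 (l v),
        ValueDerivBoundedAt (layerInput A l n x v j) θ (|A 0| + K * β) (K * β) := by
      intro j hj
      rcases Nat.eq_zero_or_pos v with rfl | hv0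
      · have hxj : |x j| ≤ ξ := hx j hj
        exact valueDerivBoundedAt_const (x j) θ (by nlinarith [abs_nonneg (A 0)]) (by positivity)
      · rw [layerInput, if_neg hv0.ne']
        exact (ih (by omega) j hj).comp hA hK
    rw [net_toInput_succ]
    refine (valueDerivBoundedAt_add_sum_mul hT1 (norm_toInputCLM_le_one _ _)
      (by rw [toInputCLM_apply]; exact hT _) (fun _ _ => norm_toInputCLM_le_one _ _)
      (fun _ _ => by rw [toInputCLM_apply]; exact hT _) hinput).mono ?_ ?_ <;>
    · rw [Nat.card_Icc, Nat.add_sub_cancel]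
      calc _ ≤ (3 + |A 0|) * M * T * K * β :=
            layer_bound_le_growth (abs_nonneg _) (by linarith) hK1 hβ hlv hMv
        _ = ξ * ((3 + |A 0|) * M * T * K) ^ (v + 1) := by ring

end Network

theorem gradient_param_bound_general
    (a b : ℝ)
    (A : ℝ → ℝ) (hA : ContDiff ℝ 1 A) (K : ℝ) (hK : ∀ x : ℝ, |deriv A x| ≤ K)
    (d L : ℕ)
    (l : ℕ → ℕ) (hl0 : l 0 = d) (hl : ∀ i, 1 ≤ l i)
    (θ : EuclideanSpace ℝ (Fin (dk l L)))
    (x : ℕ → ℝ) (hx : ∀ j ∈ Finset.Icc 1 d, x j ∈ Set.Icc a b) :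
    ‖gradient
        (fun ψ : EuclideanSpace ℝ (Fin (dk l L)) => net A l (toInput (dk l L) ψ) x L 1) θ‖ ≤
      max 1 (max |a| |b|) * (3 + |A 0|) ^ L *
        ((Finset.fold max 0 (fun h => (l h : ℝ)) (Finset.range L)) *
          max 1 (Finset.univ.fold max 0 (fun j : Fin (dk l L) => |θ j|)) *
          max 1 K) ^ L := by
  have hbound := valueDerivBoundedAt_net (M := fold max 0 (fun h => (l h : ℝ)) (range L))
    (hA.differentiable one_ne_zero) (le_max_left 1 K) (fun t => (hK t).trans (le_max_right 1 K)) hl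
    (fun v hv => (le_fold_max _).2 (Or.inr ⟨v, mem_range.2 hv, le_rfl⟩))
    (le_max_left 1 _) (fun p => (abs_toInput_le_fold_max _ p θ).trans (le_max_right 1 _))
    (le_max_left 1 (max |a| |b|))
    (fun j hj => (abs_le_max_abs_abs (hx j (hl0 ▸ hj)).1 (hx j (hl0 ▸ hj)).2).trans
      (le_max_right 1 _))
    L le_rfl 1 (mem_Icc.2 ⟨le_rfl, hl L⟩)
  rw [norm_gradient_eq_norm_fderiv]
  exact hbound.2.2.trans_eq (by simp only [mul_pow]; ring)

/-- a priori bound for the parameter-gradient of the realization.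
For a `C¹` activation `A` with derivative bounded by `K`, the Euclidean norm of the
gradient of the realization with respect to the parameter vector satisfies the stated
explicit bound on `[a,b]^d`. -/
theorem gradient_param_bound
    (a b : ℝ) (hab : a < b)
    (A : ℝ → ℝ) (hA : ContDiff ℝ 1 A) (K : ℝ) (hK : ∀ x : ℝ, |deriv A x| ≤ K)
    (d L : ℕ) (hd : 1 ≤ d) (hL : 1 ≤ L)
    (l : ℕ → ℕ) (hl0 : l 0 = d) (hlL : l L = 1) (hl : ∀ i, 1 ≤ l i)
    (θ : EuclideanSpace ℝ (Fin (dk l L)))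
    (x : ℕ → ℝ) (hx : ∀ j ∈ Finset.Icc 1 d, x j ∈ Set.Icc a b) :
    ‖gradient
        (fun ψ : EuclideanSpace ℝ (Fin (dk l L)) => net A l (toInput (dk l L) ψ) x L 1) θ‖ ≤
      max 1 (max |a| |b|) * (3 + |A 0|) ^ L *
        ((Finset.fold max 0 (fun h => (l h : ℝ)) (Finset.range L)) *
          max 1 (Finset.univ.fold max 0 (fun j : Fin (dk l L) => |θ j|)) *
          max 1 K) ^ L :=
  gradient_param_bound_general a b A hA K hK d L l hl0 hl θ x hx
end

section
/- Let p ≥ 2, d, n ∈ ℕ, and let X₁,…,X_n be i.i.d. ℝ^d-valued random variables with E‖X₁‖ < ∞. Then (E[‖E[X₁] − (1/n)Σ_{i=1}^n X_i‖^p])^{1/p} ≤ 2·((p−1)/n)^{1/2} · (E[‖X₁ − E[X₁]‖^p])^{1/p}. -/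
/-!
Put `Zᵢ = Xᵢ - E[X₁]`, so that the error is `-(1/n) ∑ Zᵢ` with `Zᵢ` independent and centred.
For `p ≥ 2` a Hilbert space satisfies the two-point inequality
`‖a + b‖ᵖ + ‖a - b‖ᵖ ≤ 2 (‖a‖² + (p - 1) ‖b‖²)^(p/2)`: as a function of `⟪a, b⟫` the left side
is even and convex, so it reduces to `a`, `b` parallel, i.e. to a one-variable calculus inequality.
For independent `S` and centred `Y`, integrating it, applying Minkowski in `L^(p/2)` and using
`‖S‖_p ≤ ‖S - Y‖_p` (Jensen after conditioning on `S`) gives, by the power mean inequality,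
`‖S + Y‖_p² ≤ ‖S‖_p² + 2 (p - 1) ‖Y‖_p²`. Induction yields `‖∑ Zᵢ‖_p² ≤ 2 (p - 1) n ‖Z₁‖_p²`,
and `√(2 (p - 1) / n) ≤ 2 √((p - 1) / n)`.
-/

open MeasureTheory ProbabilityTheory Set
open scoped ENNReal

theorem Real.rpow_eq_rpow_sub_one_mul {x : ℝ} (hx : x ≠ 0) (y : ℝ) :
    x ^ y = x ^ (y - 1) * x := by
  rw [← Real.rpow_add_one hx, sub_add_cancel]

theorem Real.sq_rpow_div_two {x : ℝ} (hx : 0 ≤ x) (p : ℝ) : (x ^ 2) ^ (p / 2) = x ^ p := by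
  rw [← Real.rpow_natCast_mul hx]
  norm_num [mul_div_cancel₀]

theorem one_add_rpow_mul_one_sub_le {β t : ℝ} (hβ : 1 ≤ β) (ht₀ : 0 ≤ t) (ht₁ : t ≤ 1) :
    (1 + t) ^ β * (1 - β * t) ≤ (1 - t) ^ β * (1 + β * t) := by
  let h : ℝ → ℝ := fun s ↦ (1 - s) ^ β * (1 + β * s) - (1 + s) ^ β * (1 - β * s)
  have hderiv : ∀ s, HasDerivAt h ((-1) * β * (1 - s) ^ (β - 1) * (1 + β * s) +
      (1 - s) ^ β * β - (1 * β * (1 + s) ^ (β - 1) * (1 - β * s) + (1 + s) ^ β * (-β))) s :=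
    fun s ↦ ((((hasDerivAt_id s).const_sub 1).rpow_const (Or.inr hβ)).mul
      (((hasDerivAt_id s).const_mul β).const_add 1)).sub
      ((((hasDerivAt_id s).const_add 1).rpow_const (Or.inr hβ)).mul
        (((hasDerivAt_id s).const_mul β).const_sub 1)) |>.congr_deriv (by simp)
  have hmono : MonotoneOn h (Icc 0 1) := by
    refine monotoneOn_of_hasDerivWithinAt_nonneg (convex_Icc 0 1)
      (fun s _ ↦ (hderiv s).continuousAt.continuousWithinAt)
      (fun s _ ↦ (hderiv s).hasDerivWithinAt) fun s hs ↦ ?_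
    rw [interior_Icc] at hs
    obtain ⟨hs₀, hs₁⟩ := hs
    have hA : 1 ≤ (1 + s) ^ (β - 1) := Real.one_le_rpow (by linarith) (by linarith)
    have hB : (1 - s) ^ (β - 1) ≤ 1 := Real.rpow_le_one (by linarith) (by linarith) (by linarith)
    rw [Real.rpow_eq_rpow_sub_one_mul (by linarith : (1 : ℝ) - s ≠ 0) β,
      Real.rpow_eq_rpow_sub_one_mul (by linarith : (1 : ℝ) + s ≠ 0) β]
    -- the derivative is `β (1 + β) s ((1 + s) ^ (β - 1) - (1 - s) ^ (β - 1))`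
    nlinarith [mul_nonneg (mul_nonneg (by nlinarith : (0 : ℝ) ≤ β * (1 + β)) hs₀.le)
      (sub_nonneg.2 (hB.trans hA))]
  simpa [h] using hmono ⟨le_rfl, zero_le_one⟩ ⟨ht₀, ht₁⟩ ht₀

theorem one_add_rpow_add_one_sub_rpow_le {p t : ℝ} (hp : 2 ≤ p) (ht₀ : 0 ≤ t) (ht₁ : t ≤ 1) :
    (1 + t) ^ p + (1 - t) ^ p ≤ 2 * (1 + (p - 1) * t ^ 2) ^ (p / 2) := by
  have hp₁ : 1 ≤ p := by linarith
  have hq : ∀ s, 0 ≤ s → 0 < 1 + (p - 1) * s ^ 2 := fun s _ ↦ by nlinarith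
  have hsum : ∀ s ∈ Icc (0 : ℝ) 1, 0 < (1 + s) ^ p + (1 - s) ^ p := fun s hs ↦
    add_pos_of_pos_of_nonneg (Real.rpow_pos_of_pos (by linarith [hs.1]) p)
      (Real.rpow_nonneg (by linarith [hs.2]) p)
  let Φ : ℝ → ℝ := fun s ↦
    Real.log 2 + p / 2 * Real.log (1 + (p - 1) * s ^ 2) - Real.log ((1 + s) ^ p + (1 - s) ^ p)
  have hderiv : ∀ s ∈ Icc (0 : ℝ) 1, HasDerivAt Φ
      (p / 2 * ((p - 1) * (2 * s) / (1 + (p - 1) * s ^ 2)) -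
        (1 * p * (1 + s) ^ (p - 1) + (-1) * p * (1 - s) ^ (p - 1)) /
          ((1 + s) ^ p + (1 - s) ^ p)) s := fun s hs ↦
    ((((((hasDerivAt_pow 2 s).const_mul (p - 1)).const_add 1).log
      (hq s hs.1).ne').const_mul (p / 2)).const_add _).sub
      (((((hasDerivAt_id s).const_add 1).rpow_const (Or.inr hp₁)).add
        (((hasDerivAt_id s).const_sub 1).rpow_const (Or.inr hp₁))).log
          (hsum s hs).ne') |>.congr_deriv (by simp)
  have hmono : MonotoneOn Φ (Icc 0 1) := by
    refine monotoneOn_of_hasDerivWithinAt_nonneg (convex_Icc 0 1)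
      (fun s hs ↦ (hderiv s hs).continuousAt.continuousWithinAt)
      (fun s hs ↦ (hderiv s (interior_subset hs)).hasDerivWithinAt) fun s hs ↦ ?_
    have hsum_s := hsum s (interior_subset hs)
    rw [interior_Icc] at hs
    obtain ⟨hs₀, hs₁⟩ := hs
    -- after clearing denominators, `Φ' s ≥ 0` is exactly `hE`
    have hE := one_add_rpow_mul_one_sub_le (by linarith : 1 ≤ p - 1) hs₀.le hs₁.le
    rw [sub_nonneg, mul_div_assoc', div_le_div_iff₀ hsum_s (hq s hs₀.le)]
    rw [Real.rpow_eq_rpow_sub_one_mul (by linarith : (1 : ℝ) - s ≠ 0) p,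
      Real.rpow_eq_rpow_sub_one_mul (by linarith : (1 : ℝ) + s ≠ 0) p] at hsum_s ⊢
    nlinarith
  have hΦ : Φ 0 ≤ Φ t := hmono ⟨le_rfl, zero_le_one⟩ ⟨ht₀, ht₁⟩ ht₀
  rw [← Real.log_le_log_iff (hsum t ⟨ht₀, ht₁⟩) (by positivity),
    Real.log_mul two_ne_zero (by positivity), Real.log_rpow (hq t ht₀)]
  simp only [Φ] at hΦ
  norm_num at hΦ
  linarith

theorem add_rpow_add_abs_sub_rpow_le {p x y : ℝ} (hp : 2 ≤ p) (hx : 0 ≤ x) (hy : 0 ≤ y) :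
    (x + y) ^ p + |x - y| ^ p ≤ 2 * (x ^ 2 + (p - 1) * y ^ 2) ^ (p / 2) := by
  wlog hyx : y ≤ x generalizing x y
  · calc (x + y) ^ p + |x - y| ^ p = (y + x) ^ p + |y - x| ^ p := by
          rw [add_comm x y, abs_sub_comm]
      _ ≤ 2 * (y ^ 2 + (p - 1) * x ^ 2) ^ (p / 2) := this hy hx (by linarith)
      _ ≤ 2 * (x ^ 2 + (p - 1) * y ^ 2) ^ (p / 2) := by
          have : y ^ 2 + (p - 1) * x ^ 2 ≤ x ^ 2 + (p - 1) * y ^ 2 := by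
            nlinarith [mul_le_mul_of_nonneg_left (pow_le_pow_left₀ hx (le_of_not_ge hyx) 2)
              (by linarith : (0 : ℝ) ≤ p - 2)]
          gcongr 2 * ?_ ^ _
          nlinarith
  obtain rfl | hx := hx.eq_or_lt
  · obtain rfl : y = 0 := le_antisymm hyx hy
    have hp₀ : p ≠ 0 := by linarith
    simp [Real.zero_rpow hp₀, Real.zero_rpow (div_ne_zero hp₀ two_ne_zero)]
  have ht₁ : y / x ≤ 1 := div_le_one_of_le₀ hyx hx.le
  have key := one_add_rpow_add_one_sub_rpow_le hp (div_nonneg hy hx.le) ht₁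
  have h₁ : x + y = x * (1 + y / x) := by field_simp
  have h₂ : |x - y| = x * (1 - y / x) := by rw [abs_of_nonneg (by linarith)]; field_simp
  have h₃ : x ^ 2 + (p - 1) * y ^ 2 = x ^ 2 * (1 + (p - 1) * (y / x) ^ 2) := by field_simp
  rw [h₁, h₂, h₃, Real.mul_rpow hx.le (by positivity), Real.mul_rpow hx.le (by linarith),
    Real.mul_rpow (by positivity) (by nlinarith [sq_nonneg (y / x)]),
    Real.sq_rpow_div_two hx.le]
  nlinarith [Real.rpow_pos_of_pos hx p]

theorem convexOn_add_mul_rpow {r : ℝ} (hr : 1 ≤ r) (N k : ℝ) :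
    ConvexOn ℝ {s | 0 ≤ N + k * s} fun s ↦ (N + k * s) ^ r :=
  (convexOn_rpow hr).comp_affineMap
    { toFun := fun s ↦ N + k * s, linear := k • LinearMap.id,
      map_vadd' := fun s v ↦ by simp; ring }

theorem norm_add_rpow_add_norm_sub_rpow_le {F : Type*} [NormedAddCommGroup F]
    [InnerProductSpace ℝ F] {p : ℝ} (hp : 2 ≤ p) (a b : F) :
    ‖a + b‖ ^ p + ‖a - b‖ ^ p ≤ 2 * (‖a‖ ^ 2 + (p - 1) * ‖b‖ ^ 2) ^ (p / 2) := by
  set N := ‖a‖ ^ 2 + ‖b‖ ^ 2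
  set c := ‖a‖ * ‖b‖
  let φ : ℝ → ℝ := fun s ↦ (N + 2 * s) ^ (p / 2) + (N + (-2) * s) ^ (p / 2)
  have hc : 0 ≤ c := by positivity
  have hNc : 2 * c ≤ N := by nlinarith [sq_nonneg (‖a‖ - ‖b‖)]
  have hconv : ConvexOn ℝ (Icc (-c) c) φ := by
    have hr : 1 ≤ p / 2 := by linarith
    refine ((convexOn_add_mul_rpow hr N 2).subset ?_ (convex_Icc _ _)).add
      ((convexOn_add_mul_rpow hr N (-2)).subset ?_ (convex_Icc _ _)) <;>
    · intro s hs
      simp only [mem_ofPred_eq]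
      linarith [hs.1, hs.2]
  have hs : inner ℝ a b ∈ segment ℝ (-c) c := by
    rw [segment_eq_Icc (by linarith)]
    exact abs_le.1 (abs_real_inner_le_norm a b)
  have hφ : ∀ s, φ s = φ (-s) := fun s ↦ by simp only [φ]; ring_nf
  have h_add : ‖a + b‖ ^ 2 = N + 2 * inner ℝ a b := by rw [norm_add_sq_real]; ring
  have h_sub : ‖a - b‖ ^ 2 = N + (-2) * inner ℝ a b := by rw [norm_sub_sq_real]; ring
  have h_c : φ c = (‖a‖ + ‖b‖) ^ p + |‖a‖ - ‖b‖| ^ p := by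
    rw [← Real.sq_rpow_div_two (by positivity), ← Real.sq_rpow_div_two (abs_nonneg _), sq_abs]
    simp only [φ, N, c]
    ring_nf
  calc ‖a + b‖ ^ p + ‖a - b‖ ^ p = φ (inner ℝ a b) := by
        rw [← Real.sq_rpow_div_two (norm_nonneg _), ← Real.sq_rpow_div_two (norm_nonneg (a - b)),
          h_add, h_sub]
    _ ≤ max (φ (-c)) (φ c) :=
        hconv.le_on_segment (left_mem_Icc.2 (by linarith)) (right_mem_Icc.2 (by linarith)) hs
    _ = (‖a‖ + ‖b‖) ^ p + |‖a‖ - ‖b‖| ^ p := by rw [← hφ, max_self, h_c]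
    _ ≤ 2 * (‖a‖ ^ 2 + (p - 1) * ‖b‖ ^ 2) ^ (p / 2) :=
        add_rpow_add_abs_sub_rpow_le hp (norm_nonneg a) (norm_nonneg b)

theorem ENNReal.sq_rpow_div_two (x : ℝ≥0∞) (p : ℝ) : (x ^ 2) ^ (p / 2) = x ^ p := by
  rw [← ENNReal.rpow_natCast_mul, Nat.cast_two, mul_div_cancel₀ p two_ne_zero]

theorem ENNReal.add_le_two_mul_of_rpow_add_rpow_le {x y z : ℝ≥0∞} {r : ℝ} (hr : 1 ≤ r)
    (h : x ^ r + y ^ r ≤ 2 * z ^ r) : x + y ≤ 2 * z := by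
  have hr₀ : 0 < r := by linarith
  refine (ENNReal.rpow_le_rpow_iff hr₀).1 ?_
  calc (x + y) ^ r ≤ 2 ^ (r - 1) * (x ^ r + y ^ r) :=
        ENNReal.rpow_add_le_mul_rpow_add_rpow _ _ hr
    _ ≤ 2 ^ (r - 1) * (2 * z ^ r) := by gcongr
    _ = (2 * z) ^ r := by
      rw [← mul_assoc, ENNReal.mul_rpow_of_nonneg _ _ hr₀.le]
      congr 1
      conv_rhs => rw [← sub_add_cancel r 1,
        ENNReal.rpow_add _ _ two_ne_zero ENNReal.ofNat_ne_top, ENNReal.rpow_one]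

theorem eLpNorm_ofReal_rpow_eq_lintegral {α ε : Type*} [MeasurableSpace α] {μ : Measure α}
    [ENorm ε] {f : α → ε} {p : ℝ} (hp : 0 < p) :
    eLpNorm f (ENNReal.ofReal p) μ ^ p = ∫⁻ x, ‖f x‖ₑ ^ p ∂μ := by
  have h := eLpNorm_nnreal_pow_eq_lintegral (f := f) (μ := μ) (p := p.toNNReal)
    (by simpa using hp)
  rwa [Real.coe_toNNReal p hp.le] at h

theorem integral_norm_rpow_rpow_inv_eq_lpNorm {α E : Type*} [MeasurableSpace α]
    {μ : Measure α} [NormedAddCommGroup E] {f : α → E} {p : ℝ} (hp : 0 < p)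
    (hf : AEStronglyMeasurable f μ) :
    (∫ x, ‖f x‖ ^ p ∂μ) ^ p⁻¹ = lpNorm f (ENNReal.ofReal p) μ := by
  rw [lpNorm_eq_integral_norm_rpow_toReal (by simpa using hp) ENNReal.ofReal_ne_top hf,
    ENNReal.toReal_ofReal hp.le]

theorem eLpNorm_add_rpow_add_eLpNorm_sub_rpow_le {Ω E : Type*} [MeasurableSpace Ω]
    {μ : Measure Ω} [NormedAddCommGroup E] [InnerProductSpace ℝ E] {p : ℝ} (hp : 2 ≤ p)
    (S Y : Ω → E) :
    eLpNorm (S + Y) (ENNReal.ofReal p) μ ^ p + eLpNorm (S - Y) (ENNReal.ofReal p) μ ^ p ≤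
      2 * eLpNorm (fun ω ↦ ‖S ω‖ ^ 2 + (p - 1) * ‖Y ω‖ ^ 2) (ENNReal.ofReal (p / 2)) μ
        ^ (p / 2) := by
  have hp₀ : 0 < p := by linarith
  rw [eLpNorm_ofReal_rpow_eq_lintegral hp₀, eLpNorm_ofReal_rpow_eq_lintegral hp₀,
    eLpNorm_ofReal_rpow_eq_lintegral (by linarith),
    ← lintegral_const_mul' _ _ ENNReal.ofNat_ne_top]
  refine (le_lintegral_add _ _).trans (lintegral_mono fun ω ↦ ?_)
  have hG : 0 ≤ ‖S ω‖ ^ 2 + (p - 1) * ‖Y ω‖ ^ 2 := by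
    have := sq_nonneg ‖Y ω‖
    nlinarith
  simp only [Pi.add_apply, Pi.sub_apply, ← ofReal_norm, Real.norm_of_nonneg hG]
  rw [ENNReal.ofReal_rpow_of_nonneg (norm_nonneg _) hp₀.le,
    ENNReal.ofReal_rpow_of_nonneg (norm_nonneg _) hp₀.le,
    ENNReal.ofReal_rpow_of_nonneg hG (by linarith),
    ← ENNReal.ofReal_add (by positivity) (by positivity), ← ENNReal.ofReal_ofNat 2,
    ← ENNReal.ofReal_mul zero_le_two]
  exact ENNReal.ofReal_le_ofReal (norm_add_rpow_add_norm_sub_rpow_le hp (S ω) (Y ω))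

theorem eLpNorm_norm_sq_add_const_mul_norm_sq_le {Ω E : Type*} [MeasurableSpace Ω]
    {μ : Measure Ω} [NormedAddCommGroup E] {p c : ℝ} (hp : 2 ≤ p) (hc : 0 ≤ c) {S Y : Ω → E}
    (hS : AEStronglyMeasurable S μ) (hY : AEStronglyMeasurable Y μ) :
    eLpNorm (fun ω ↦ ‖S ω‖ ^ 2 + c * ‖Y ω‖ ^ 2) (ENNReal.ofReal (p / 2)) μ ≤
      eLpNorm S (ENNReal.ofReal p) μ ^ 2 +
        ENNReal.ofReal c * eLpNorm Y (ENNReal.ofReal p) μ ^ 2 := by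
  have h_sq : ∀ f : Ω → E, eLpNorm (fun ω ↦ ‖f ω‖ ^ 2) (ENNReal.ofReal (p / 2)) μ =
      eLpNorm f (ENNReal.ofReal p) μ ^ 2 := fun f ↦ by
    have h := eLpNorm_norm_rpow f two_pos (p := ENNReal.ofReal (p / 2)) (μ := μ)
    simp only [Real.rpow_two, ENNReal.rpow_two] at h
    rw [h, ← ENNReal.ofReal_mul (by linarith), div_mul_cancel₀ p two_ne_zero]
  calc eLpNorm (fun ω ↦ ‖S ω‖ ^ 2 + c * ‖Y ω‖ ^ 2) (ENNReal.ofReal (p / 2)) μ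
      = eLpNorm ((fun ω ↦ ‖S ω‖ ^ 2) + c • fun ω ↦ ‖Y ω‖ ^ 2) (ENNReal.ofReal (p / 2)) μ := by
        congr 1
    _ ≤ eLpNorm (fun ω ↦ ‖S ω‖ ^ 2) (ENNReal.ofReal (p / 2)) μ
        + eLpNorm (c • fun ω ↦ ‖Y ω‖ ^ 2) (ENNReal.ofReal (p / 2)) μ :=
      eLpNorm_add_le (by fun_prop) (by fun_prop) (by simp; linarith)
    _ = _ := by rw [eLpNorm_const_smul, h_sq, h_sq, Real.enorm_of_nonneg hc]

theorem enorm_rpow_le_lintegral_enorm_add_rpow {E : Type*} [NormedAddCommGroup E]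
    [NormedSpace ℝ E] [CompleteSpace E] [MeasurableSpace E] {p : ℝ} (hp : 1 ≤ p)
    {ν : Measure E} [IsProbabilityMeasure ν] (hν : Integrable id ν) (hν0 : ∫ v, v ∂ν = 0)
    (u : E) : ‖u‖ₑ ^ p ≤ ∫⁻ v, ‖u + v‖ₑ ^ p ∂ν := by
  have hp₀ : 0 < p := by linarith
  have hmean : ∫ v, (u + v) ∂ν = u := by
    simpa [hν0] using integral_add (integrable_const u) hν
  have h₁ : ‖u‖ₑ ≤ eLpNorm (fun v ↦ u + v) 1 ν := by
    rw [eLpNorm_one_eq_lintegral_enorm]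
    calc ‖u‖ₑ = ‖∫ v, (u + v) ∂ν‖ₑ := by rw [hmean]
      _ ≤ ∫⁻ v, ‖u + v‖ₑ ∂ν := enorm_integral_le_lintegral_enorm _
  have h₂ : eLpNorm (fun v ↦ u + v) 1 ν ≤ eLpNorm (fun v ↦ u + v) (ENNReal.ofReal p) ν :=
    eLpNorm_le_eLpNorm_of_exponent_le (by simpa using hp)
      ((integrable_const u).add hν).aestronglyMeasurable
  rw [← eLpNorm_ofReal_rpow_eq_lintegral hp₀]
  exact ENNReal.rpow_le_rpow (h₁.trans h₂) hp₀.le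

section NormedSpace

variable {Ω E : Type*} [MeasurableSpace Ω] {μ : Measure Ω} [IsProbabilityMeasure μ]
  [NormedAddCommGroup E] [NormedSpace ℝ E] [CompleteSpace E]
  [MeasurableSpace E] [BorelSpace E] [SecondCountableTopology E] {p : ℝ}

theorem eLpNorm_le_eLpNorm_add_of_indepFun (hp : 1 ≤ p) {U V : Ω → E}
    (hU : AEMeasurable U μ) (hV : AEMeasurable V μ) (hUV : IndepFun U V μ)
    (hVint : Integrable V μ) (hV0 : ∫ ω, V ω ∂μ = 0) :
    eLpNorm U (ENNReal.ofReal p) μ ≤ eLpNorm (U + V) (ENNReal.ofReal p) μ := by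
  have hp₀ : 0 < p := by linarith
  have : IsProbabilityMeasure (μ.map V) := Measure.isProbabilityMeasure_map hV
  have hν : Integrable id (μ.map V) := by
    rwa [integrable_map_measure aestronglyMeasurable_id hV]
  have hν0 : ∫ v, v ∂(μ.map V) = 0 := by
    rw [← hV0]
    exact integral_map hV aestronglyMeasurable_id
  have hprod : μ.map (fun ω ↦ (U ω, V ω)) = (μ.map U).prod (μ.map V) :=
    (indepFun_iff_map_prod_eq_prod_map_map hU hV).1 hUV
  have hmeas : Measurable fun z : E × E ↦ ‖z.1 + z.2‖ₑ ^ p := by fun_prop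
  rw [← ENNReal.rpow_le_rpow_iff hp₀, eLpNorm_ofReal_rpow_eq_lintegral hp₀,
    eLpNorm_ofReal_rpow_eq_lintegral hp₀]
  calc ∫⁻ ω, ‖U ω‖ₑ ^ p ∂μ = ∫⁻ u, ‖u‖ₑ ^ p ∂(μ.map U) :=
        (lintegral_map' (measurable_enorm.pow_const p).aemeasurable hU).symm
    _ ≤ ∫⁻ u, ∫⁻ v, ‖u + v‖ₑ ^ p ∂(μ.map V) ∂(μ.map U) :=
        lintegral_mono (enorm_rpow_le_lintegral_enorm_add_rpow hp hν hν0)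
    _ = ∫⁻ ω, ‖(U + V) ω‖ₑ ^ p ∂μ := by
        rw [← lintegral_prod _ hmeas.aemeasurable, ← hprod,
          lintegral_map' hmeas.aemeasurable (hU.prodMk hV)]
        rfl

theorem eLpNorm_le_eLpNorm_sum_of_iIndepFun {ι : Type*} {Y : ι → Ω → E} (hp : 1 ≤ p)
    (hY : ∀ i, AEMeasurable (Y i) μ) (hind : iIndepFun Y μ) (hint : ∀ i, Integrable (Y i) μ)
    (h0 : ∀ i, ∫ ω, Y i ω ∂μ = 0) {s : Finset ι} {i : ι} (hi : i ∈ s) :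
    eLpNorm (Y i) (ENNReal.ofReal p) μ ≤ eLpNorm (∑ j ∈ s, Y j) (ENNReal.ofReal p) μ := by
  classical
  rw [← Finset.add_sum_erase s Y hi]
  refine eLpNorm_le_eLpNorm_add_of_indepFun hp (hY i)
    (Finset.aemeasurable_sum _ fun j _ ↦ hY j)
    (hind.indepFun_finsetSum_of_notMem₀ hY (Finset.notMem_erase i s)).symm
    (integrable_finsetSum' _ fun j _ ↦ hint j) ?_
  simp only [Finset.sum_apply]
  rw [integral_finsetSum _ fun j _ ↦ hint j]
  exact Finset.sum_eq_zero fun j _ ↦ h0 j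

end NormedSpace

section InnerProductSpace

variable {Ω E : Type*} [MeasurableSpace Ω] {μ : Measure Ω} [IsProbabilityMeasure μ]
  [NormedAddCommGroup E] [InnerProductSpace ℝ E] [CompleteSpace E]
  [MeasurableSpace E] [BorelSpace E] [SecondCountableTopology E] {p : ℝ}

theorem eLpNorm_add_sq_le_of_indepFun (hp : 2 ≤ p) {S Y : Ω → E}
    (hS : AEMeasurable S μ) (hY : AEMeasurable Y μ) (hSY : IndepFun S Y μ)
    (hYint : Integrable Y μ) (hY0 : ∫ ω, Y ω ∂μ = 0) :
    eLpNorm (S + Y) (ENNReal.ofReal p) μ ^ 2 ≤ eLpNorm S (ENNReal.ofReal p) μ ^ 2 +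
      2 * ENNReal.ofReal (p - 1) * eLpNorm Y (ENNReal.ofReal p) μ ^ 2 := by
  set q := ENNReal.ofReal p
  have h_sub : eLpNorm S q μ ≤ eLpNorm (S - Y) q μ := by
    rw [sub_eq_add_neg]
    exact eLpNorm_le_eLpNorm_add_of_indepFun (by linarith) hS hY.neg
      (hSY.comp measurable_id measurable_neg) hYint.neg
      (by simp only [Pi.neg_apply, integral_neg, hY0, neg_zero])
  have h_mean := ENNReal.add_le_two_mul_of_rpow_add_rpow_le (by linarith : 1 ≤ p / 2)
    (x := eLpNorm (S + Y) q μ ^ 2) (y := eLpNorm S q μ ^ 2)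
    (z := eLpNorm S q μ ^ 2 + ENNReal.ofReal (p - 1) * eLpNorm Y q μ ^ 2) <| by
    rw [ENNReal.sq_rpow_div_two, ENNReal.sq_rpow_div_two]
    calc eLpNorm (S + Y) q μ ^ p + eLpNorm S q μ ^ p
        ≤ eLpNorm (S + Y) q μ ^ p + eLpNorm (S - Y) q μ ^ p := by gcongr
      _ ≤ 2 * eLpNorm (fun ω ↦ ‖S ω‖ ^ 2 + (p - 1) * ‖Y ω‖ ^ 2) (ENNReal.ofReal (p / 2)) μ
            ^ (p / 2) := eLpNorm_add_rpow_add_eLpNorm_sub_rpow_le hp S Y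
      _ ≤ _ := by
        gcongr
        exact eLpNorm_norm_sq_add_const_mul_norm_sq_le hp (by linarith)
          hS.aestronglyMeasurable hY.aestronglyMeasurable
  obtain hS_top | hS_fin := eq_or_ne (eLpNorm S q μ) ∞
  · simp [hS_top]
  refine ENNReal.le_of_add_le_add_right (a := eLpNorm S q μ ^ 2) (by simpa using hS_fin) ?_
  calc _ ≤ _ := h_mean
    _ = _ := by ring

variable {ι : Type*} {Y : ι → Ω → E}

theorem eLpNorm_sum_sq_le_of_iIndepFun (hp : 2 ≤ p) (hY : ∀ i, AEMeasurable (Y i) μ)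
    (hind : iIndepFun Y μ) (hint : ∀ i, Integrable (Y i) μ) (h0 : ∀ i, ∫ ω, Y i ω ∂μ = 0)
    (s : Finset ι) :
    eLpNorm (∑ i ∈ s, Y i) (ENNReal.ofReal p) μ ^ 2 ≤
      2 * ENNReal.ofReal (p - 1) * ∑ i ∈ s, eLpNorm (Y i) (ENNReal.ofReal p) μ ^ 2 := by
  classical
  induction s using Finset.induction_on with
  | empty => simp
  | insert j s hj ih =>
    rw [Finset.sum_insert hj, Finset.sum_insert hj, add_comm (Y j), mul_add, add_comm (_ * _)]
    calc _ ≤ _ := eLpNorm_add_sq_le_of_indepFun hp (Finset.aemeasurable_sum s fun i _ ↦ hY i)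
          (hY j) (hind.indepFun_finsetSum_of_notMem₀ hY hj) (hint j) (h0 j)
      _ ≤ _ := by gcongr

theorem lpNorm_sum_le_of_iIndepFun [Fintype ι] (hp : 2 ≤ p) (hY : ∀ i, AEMeasurable (Y i) μ)
    (hind : iIndepFun Y μ) (hint : ∀ i, Integrable (Y i) μ) (h0 : ∀ i, ∫ ω, Y i ω ∂μ = 0)
    {M : ℝ≥0∞} (hM : ∀ i, eLpNorm (Y i) (ENNReal.ofReal p) μ = M) :
    lpNorm (∑ i, Y i) (ENNReal.ofReal p) μ ≤ √(2 * (p - 1) * Fintype.card ι) * M.toReal := by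
  obtain rfl | hM_fin := eq_or_ne M ∞
  -- `lpNorm` vanishes outside `L^p`, so the sum has to leave `L^p` as well
  · suffices lpNorm (∑ i, Y i) (ENNReal.ofReal p) μ = 0 by rw [this]; positivity
    cases isEmpty_or_nonempty ι
    · simp
    obtain ⟨i⟩ := ‹Nonempty ι›
    refine lpNorm_of_not_memLp fun hsum ↦ hsum.eLpNorm_ne_top (top_le_iff.1 ?_)
    rw [← hM i]
    exact eLpNorm_le_eLpNorm_sum_of_iIndepFun (by linarith) hY hind hint h0 (Finset.mem_univ i)
  have hsum := eLpNorm_sum_sq_le_of_iIndepFun hp hY hind hint h0 Finset.univ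
  simp only [hM, Finset.sum_const, Finset.card_univ, nsmul_eq_mul] at hsum
  rw [← toReal_eLpNorm (Finset.aemeasurable_sum _ fun i _ ↦ hY i).aestronglyMeasurable,
    ← Real.sqrt_sq ENNReal.toReal_nonneg, ← Real.sqrt_sq (ENNReal.toReal_nonneg (a := M)),
    ← Real.sqrt_mul (by nlinarith)]
  refine Real.sqrt_le_sqrt ?_
  simpa [ENNReal.toReal_mul, ENNReal.toReal_ofReal (by linarith : 0 ≤ p - 1), mul_assoc] using
    ENNReal.toReal_mono (by finiteness) hsum

theorem lpNorm_sum_sub_integral_le_of_identDistrib [Fintype ι] (hp : 2 ≤ p) {X : ι → Ω → E}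
    (i₀ : ι) (hX : ∀ i, Measurable (X i)) (hind : iIndepFun X μ)
    (hid : ∀ i, IdentDistrib (X i) (X i₀) μ μ) (hint : Integrable (X i₀) μ) :
    lpNorm (∑ i, fun ω ↦ X i ω - ∫ ω', X i₀ ω' ∂μ) (ENNReal.ofReal p) μ ≤
      √(2 * (p - 1) * Fintype.card ι) *
        lpNorm (fun ω ↦ X i₀ ω - ∫ ω', X i₀ ω' ∂μ) (ENNReal.ofReal p) μ := by
  set m := ∫ ω', X i₀ ω' ∂μ
  have hX_int : ∀ i, Integrable (X i) μ := fun i ↦ (hid i).integrable_iff.2 hint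
  rw [← toReal_eLpNorm ((hX i₀).sub_const m).aestronglyMeasurable]
  refine lpNorm_sum_le_of_iIndepFun hp (fun i ↦ ((hX i).sub_const m).aemeasurable)
    (hind.comp (fun _ x ↦ x - m) fun _ ↦ measurable_id.sub_const m)
    (fun i ↦ (hX_int i).sub (integrable_const m)) (fun i ↦ ?_)
    fun i ↦ ((hid i).comp (measurable_id.sub_const m)).eLpNorm_eq _
  simp [integral_sub (hX_int i) (integrable_const m), (hid i).integral_eq, m]

end InnerProductSpace

theorem inv_mul_sqrt_two_mul_mul_le {a x : ℝ} (ha : 0 ≤ a) (hx : 0 < x) :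
    x⁻¹ * √(2 * a * x) ≤ 2 * √(a / x) := by
  rw [show 2 * √(a / x) = √(2 ^ 2 * (a / x)) by
      rw [Real.sqrt_mul (by positivity), Real.sqrt_sq zero_le_two],
    show x⁻¹ = √(x⁻¹ ^ 2) from (Real.sqrt_sq (by positivity)).symm,
    ← Real.sqrt_mul (by positivity)]
  refine Real.sqrt_le_sqrt ?_
  field_simp
  nlinarith

theorem monte_carlo_Lp_estimate_general
    {Ω : Type} [MeasurableSpace Ω] (μ : Measure Ω) [IsProbabilityMeasure μ]
    (p : ℝ) (hp : 2 ≤ p) (d n : ℕ) (hn : 0 < n)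
    (X : Fin n → Ω → EuclideanSpace ℝ (Fin d))
    (hmeas : ∀ i, Measurable (X i))
    (hindep : iIndepFun X μ)
    (hid : ∀ i, IdentDistrib (X i) (X ⟨0, hn⟩) μ μ)
    (hint : Integrable (X ⟨0, hn⟩) μ) :
    (∫ ω, ‖(∫ ω', X ⟨0, hn⟩ ω' ∂μ) - (n : ℝ)⁻¹ • ∑ i, X i ω‖ ^ p ∂μ) ^ p⁻¹ ≤
      2 * Real.sqrt ((p - 1) / n) *
        (∫ ω, ‖X ⟨0, hn⟩ ω - ∫ ω', X ⟨0, hn⟩ ω' ∂μ‖ ^ p ∂μ) ^ p⁻¹ := by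
  set m := ∫ ω', X ⟨0, hn⟩ ω' ∂μ
  have h_error : (fun ω ↦ m - (n : ℝ)⁻¹ • ∑ i, X i ω) =
      -((n : ℝ)⁻¹ • ∑ i, fun ω ↦ X i ω - m) := by
    ext1 ω
    simp [Finset.sum_sub_distrib, smul_sub, ← Nat.cast_smul_eq_nsmul ℝ, smul_smul, hn.ne']
  rw [integral_norm_rpow_rpow_inv_eq_lpNorm (by linarith) (by fun_prop),
    integral_norm_rpow_rpow_inv_eq_lpNorm (by linarith) (by fun_prop), h_error, lpNorm_neg,
    lpNorm_const_smul]
  have h_sum := lpNorm_sum_sub_integral_le_of_identDistrib hp ⟨0, hn⟩ hmeas hindep hid hint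
  rw [Fintype.card_fin] at h_sum
  calc ‖(n : ℝ)⁻¹‖₊ * lpNorm (∑ i, fun ω ↦ X i ω - m) (ENNReal.ofReal p) μ
      ≤ (n : ℝ)⁻¹ * √(2 * (p - 1) * n) *
          lpNorm (fun ω ↦ X ⟨0, hn⟩ ω - m) (ENNReal.ofReal p) μ := by
        simpa [mul_assoc] using mul_le_mul_of_nonneg_left h_sum (by positivity)
    _ ≤ 2 * √((p - 1) / n) * lpNorm (fun ω ↦ X ⟨0, hn⟩ ω - m) (ENNReal.ofReal p) μ :=
        mul_le_mul_of_nonneg_right (inv_mul_sqrt_two_mul_mul_le (by linarith) (Nat.cast_pos.2 hn))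
          lpNorm_nonneg

/-- Monte Carlo `L^p` error estimate. For i.i.d. integrable
`ℝ^d`-valued random variables `X₁, …, X_n`,
`‖E[X₁] - n⁻¹ ∑ Xᵢ‖_{L^p} ≤ 2 √((p-1)/n) · ‖X₁ - E[X₁]‖_{L^p}`. -/
theorem monte_carlo_Lp_estimate
    {Ω : Type} [MeasurableSpace Ω] (μ : Measure Ω) [IsProbabilityMeasure μ]
    (p : ℝ) (hp : 2 ≤ p) (d n : ℕ) (hd : 1 ≤ d) (hn : 0 < n)
    (X : Fin n → Ω → EuclideanSpace ℝ (Fin d))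
    (hmeas : ∀ i, Measurable (X i))
    (hindep : iIndepFun X μ)
    (hid : ∀ i, IdentDistrib (X i) (X ⟨0, hn⟩) μ μ)
    (hint : Integrable (X ⟨0, hn⟩) μ) :
    (∫ ω, ‖(∫ ω', X ⟨0, hn⟩ ω' ∂μ) - (n : ℝ)⁻¹ • ∑ i, X i ω‖ ^ p ∂μ) ^ p⁻¹ ≤
      2 * Real.sqrt ((p - 1) / n) *
        (∫ ω, ‖X ⟨0, hn⟩ ω - ∫ ω', X ⟨0, hn⟩ ω' ∂μ‖ ^ p ∂μ) ^ p⁻¹ :=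
  monte_carlo_Lp_estimate_general μ p hp d n hn X hmeas hindep hid hint
end
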